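/- arXiv:2412.05755 — 8 statements merged into one kernel-verified Lean document; each statement's English description precedes it below -/
import Mathlib

section
/- Homological perturbation lemma for chain complexes. Let k be a ring in which 2 = 0 and let C and Z be k-modules equipped with k-linear maps d : C → C and δ : Z → Z satisfying d ∘ d = 0 and δ ∘ δ = 0. Let α : C → C be a k-linear map satisfying the Maurer–Cartan equation α ∘ α + d ∘ α + α ∘ d = 0 (so that (d + α) ∘ (d + α) = 0). Suppose (i, π, h) is a strong deformation retraction from (C, d) onto (Z, δ): π ∘ d = δ ∘ π, d ∘ i = i ∘ δ, π ∘ i = id_Z, i ∘ π = id_C + d ∘ h + h ∘ d, h ∘ h = 0, h ∘ i = 0 and π ∘ h = 0. Assume id_C + h ∘ α is invertible in the endomorphism ring of C. Then id_C + α ∘ h is also invertible, and, setting β = π ∘ α ∘ (id + h ∘ α)⁻¹ ∘ i, Π = π ∘ (id + α ∘ h)⁻¹, H = (id + h ∘ α)⁻¹ ∘ h and I = (id + h ∘ α)⁻¹ ∘ i, the following hold: β ∘ β + δ ∘ β + β ∘ δ = 0 (so (δ + β) ∘ (δ + β) = 0); Π ∘ (d + α) = (δ + β) ∘ Π; (d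 + α) ∘ I = I ∘ (δ + β); Π ∘ I = id_Z; I ∘ Π = id_C + (d + α) ∘ H + H ∘ (d + α); H ∘ H = 0; H ∘ I = 0; and Π ∘ H = 0. That is, (I, Π, H) is a strong deformation retraction from (C, d + α) onto (Z, δ + β). -/
/-!
Over an arbitrary ring put `A = α (1 - h α)⁻¹`, so that `A = α + α h A = α + A h α`. Multiplying
`X = d A + A d + A (i π) A` by the unit `1 - α h` on the left and by `1 - h α` on the right
turns it, via `i π = 1 + d h + h d`, into `α α + d α + α d = 0`; hence `X = 0`. For the perturbed
data `δ + π A i`, `i + h A i`, `π + π A h`, `h + h A h` the side conditions follow from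
`h h = h i = π h = 0`, and the Maurer–Cartan equation, the two chain-map identities and the
homotopy identity hold up to `π X i`, `h X i`, `π X h` and `h X h` respectively. In characteristic
2 the signs disappear: `1 + h α = 1 - h α`, and `(1 - h α)⁻¹ i`, `π (1 - α h)⁻¹`, `(1 - h α)⁻¹ h`
are the perturbed data.
-/

section Ring

variable {R : Type*} [Ring R]

noncomputable def IsUnit.unitOneSubMulComm {a b : R} (h : IsUnit (1 - a * b)) : Rˣ where
  val := 1 - b * a
  inv := 1 + b * Ring.inverse (1 - a * b) * a
  val_inv := calc
    (1 - b * a) * (1 + b * Ring.inverse (1 - a * b) * a)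
        = 1 - b * a + b * ((1 - a * b) * Ring.inverse (1 - a * b)) * a := by noncomm_ring
    _ = 1 := by rw [Ring.mul_inverse_cancel _ h]; noncomm_ring
  inv_val := calc
    (1 + b * Ring.inverse (1 - a * b) * a) * (1 - b * a)
        = 1 - b * a + b * (Ring.inverse (1 - a * b) * (1 - a * b)) * a := by noncomm_ring
    _ = 1 := by rw [Ring.inverse_mul_cancel _ h]; noncomm_ring

theorem IsUnit.one_sub_mul_comm {a b : R} (h : IsUnit (1 - a * b)) : IsUnit (1 - b * a) :=
  h.unitOneSubMulComm.isUnit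

theorem Ring.inverse_one_sub_mul_comm {a b : R} (h : IsUnit (1 - a * b)) :
    Ring.inverse (1 - b * a) = 1 + b * Ring.inverse (1 - a * b) * a :=
  Ring.inverse_unit h.unitOneSubMulComm

theorem Ring.inverse_one_sub_eq_one_add_mul_inverse {x : R} (h : IsUnit (1 - x)) :
    Ring.inverse (1 - x) = 1 + x * Ring.inverse (1 - x) := calc
  Ring.inverse (1 - x) = (1 - x) * Ring.inverse (1 - x) + x * Ring.inverse (1 - x) := by
    noncomm_ring
  _ = 1 + x * Ring.inverse (1 - x) := by rw [Ring.mul_inverse_cancel _ h]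

theorem Ring.inverse_one_sub_eq_one_add_inverse_mul {x : R} (h : IsUnit (1 - x)) :
    Ring.inverse (1 - x) = 1 + Ring.inverse (1 - x) * x := calc
  Ring.inverse (1 - x) = Ring.inverse (1 - x) * (1 - x) + Ring.inverse (1 - x) * x := by
    noncomm_ring
  _ = 1 + Ring.inverse (1 - x) * x := by rw [Ring.inverse_mul_cancel _ h]

noncomputable def perturbationSeries (h α : R) : R := α * Ring.inverse (1 - h * α)

theorem perturbationSeries_eq_add_mul_mul_self {h α : R} (hu : IsUnit (1 - h * α)) :
    perturbationSeries h α = α + α * h * perturbationSeries h α := by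
  unfold perturbationSeries
  conv_lhs => rw [Ring.inverse_one_sub_eq_one_add_mul_inverse hu]
  noncomm_ring

theorem perturbationSeries_eq_add_self_mul_mul {h α : R} (hu : IsUnit (1 - h * α)) :
    perturbationSeries h α = α + perturbationSeries h α * h * α := by
  unfold perturbationSeries
  conv_lhs => rw [Ring.inverse_one_sub_eq_one_add_inverse_mul hu]
  noncomm_ring

theorem perturbationSeries_maurerCartan {d h α : R} (hu : IsUnit (1 - h * α))
    (hMC : α * α + d * α + α * d = 0) :
    d * perturbationSeries h α + perturbationSeries h α * d +
      perturbationSeries h α * (1 + d * h + h * d) * perturbationSeries h α = 0 := by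
  have hAu : perturbationSeries h α * (1 - h * α) = α := by
    rw [perturbationSeries, mul_assoc, Ring.inverse_mul_cancel _ hu, mul_one]
  have huA : (1 - α * h) * perturbationSeries h α = α := calc
    (1 - α * h) * perturbationSeries h α = α * ((1 - h * α) * Ring.inverse (1 - h * α)) := by
      rw [perturbationSeries]; noncomm_ring
    _ = α := by rw [Ring.mul_inverse_cancel _ hu, mul_one]
  set A := perturbationSeries h α
  set G := Ring.inverse (1 - h * α)
  have hinv : (1 + α * G * h) * (1 - α * h) = 1 := hu.unitOneSubMulComm.inv_val
  calc d * A + A * d + A * (1 + d * h + h * d) * A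
      = (1 + α * G * h) * (1 - α * h) * (d * A + A * d + A * (1 + d * h + h * d) * A) *
          ((1 - h * α) * G) := by
        rw [hinv, Ring.mul_inverse_cancel _ hu, one_mul, mul_one]
    _ = (1 + α * G * h) * ((1 - α * h) * d * (A * (1 - h * α)) + (1 - α * h) * A * d * (1 - h * α)
          + (1 - α * h) * A * (1 + d * h + h * d) * (A * (1 - h * α))) * G := by noncomm_ring
    _ = (1 + α * G * h) *
          ((1 - α * h) * d * α + α * d * (1 - h * α) + α * (1 + d * h + h * d) * α) * G := by
        rw [hAu, huA]
    _ = (1 + α * G * h) * (α * α + d * α + α * d) * G := by noncomm_ring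
    _ = 0 := by rw [hMC, mul_zero, zero_mul]

end Ring

section Retract

variable {k C Z : Type*} [Ring k] [AddCommGroup C] [AddCommGroup Z] [Module k C] [Module k Z]

structure IsStrongDeformationRetract (d : Module.End k C) (δ : Module.End k Z)
    (i : Z →ₗ[k] C) (π : C →ₗ[k] Z) (h : Module.End k C) : Prop where
  π_comp_d : π ∘ₗ d = δ ∘ₗ π
  d_comp_i : d ∘ₗ i = i ∘ₗ δ
  π_comp_i : π ∘ₗ i = LinearMap.id
  i_comp_π : i ∘ₗ π = LinearMap.id + d ∘ₗ h + h ∘ₗ d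
  h_comp_h : h ∘ₗ h = 0
  h_comp_i : h ∘ₗ i = 0
  π_comp_h : π ∘ₗ h = 0

namespace IsStrongDeformationRetract

variable {d h : Module.End k C} {δ : Module.End k Z} {i : Z →ₗ[k] C} {π : C →ₗ[k] Z}

theorem π_d_apply (hR : IsStrongDeformationRetract d δ i π h) (x : C) : π (d x) = δ (π x) :=
  LinearMap.congr_fun hR.π_comp_d x

theorem d_i_apply (hR : IsStrongDeformationRetract d δ i π h) (z : Z) : d (i z) = i (δ z) :=
  LinearMap.congr_fun hR.d_comp_i z

theorem π_i_apply (hR : IsStrongDeformationRetract d δ i π h) (z : Z) : π (i z) = z :=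
  LinearMap.congr_fun hR.π_comp_i z

theorem i_π_apply (hR : IsStrongDeformationRetract d δ i π h) (x : C) :
    i (π x) = x + d (h x) + h (d x) :=
  LinearMap.congr_fun hR.i_comp_π x

theorem h_h_apply (hR : IsStrongDeformationRetract d δ i π h) (x : C) : h (h x) = 0 :=
  LinearMap.congr_fun hR.h_comp_h x

theorem h_i_apply (hR : IsStrongDeformationRetract d δ i π h) (z : Z) : h (i z) = 0 :=
  LinearMap.congr_fun hR.h_comp_i z

theorem π_h_apply (hR : IsStrongDeformationRetract d δ i π h) (x : C) : π (h x) = 0 :=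
  LinearMap.congr_fun hR.π_comp_h x

theorem maurerCartan_transfer (hR : IsStrongDeformationRetract d δ i π h) {A : Module.End k C}
    (hA : d ∘ₗ A + A ∘ₗ d + A ∘ₗ i ∘ₗ π ∘ₗ A = 0) :
    let β := π ∘ₗ A ∘ₗ i
    β ∘ₗ β + δ ∘ₗ β + β ∘ₗ δ = 0 := by
  ext z
  have hX := congr_arg π (LinearMap.congr_fun hA (i z))
  simp only [LinearMap.add_apply, LinearMap.comp_apply, LinearMap.zero_apply, map_add,
    map_zero] at hX ⊢
  rw [← hR.π_d_apply, ← hR.d_i_apply]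
  linear_combination (norm := module) hX

theorem perturb (hR : IsStrongDeformationRetract d δ i π h) {α A : Module.End k C}
    (hAl : A = α + α ∘ₗ h ∘ₗ A) (hAr : A = α + A ∘ₗ h ∘ₗ α)
    (hA : d ∘ₗ A + A ∘ₗ d + A ∘ₗ i ∘ₗ π ∘ₗ A = 0) :
    IsStrongDeformationRetract (d + α) (δ + π ∘ₗ A ∘ₗ i) (i + h ∘ₗ A ∘ₗ i)
      (π + π ∘ₗ A ∘ₗ h) (h + h ∘ₗ A ∘ₗ h) := by
  have hA' (x : C) : d (A x) + A (d x) + A (i (π (A x))) = 0 := LinearMap.congr_fun hA x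
  have hAl' (x : C) : A x = α x + α (h (A x)) := LinearMap.congr_fun hAl x
  have hAr' (x : C) : A x = α x + A (h (α x)) := LinearMap.congr_fun hAr x
  constructor <;> ext x <;>
    simp only [LinearMap.add_apply, LinearMap.comp_apply, LinearMap.zero_apply,
      LinearMap.id_apply, map_add, map_zero, add_zero, hR.h_h_apply, hR.h_i_apply,
      hR.π_h_apply, hR.π_i_apply]
  case π_comp_d =>
    have F1 := congr_arg π (hAr' x)
    have F2 := congr_arg (π ∘ₗ A) (hR.i_π_apply x)
    have F3 := congr_arg π (hA' (h x))
    simp only [LinearMap.comp_apply, map_add, map_zero, hR.π_d_apply] at F1 F2 F3 ⊢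
    linear_combination (norm := module) -F1 - F2 - F3
  case d_comp_i =>
    have F1 := hAl' (i x)
    have F2 := hR.i_π_apply (A (i x))
    have F3 := congr_arg h (hA' (i x))
    simp only [map_add, map_zero, hR.d_i_apply] at F1 F2 F3 ⊢
    linear_combination (norm := module) -F1 - F2 - F3
  case i_comp_π =>
    have F1 := hR.i_π_apply x
    have F2 := hR.i_π_apply (A (h x))
    have F3 := congr_arg (h ∘ₗ A) (hR.i_π_apply x)
    have F4 := hAl' (h x)
    have F5 := congr_arg h (hAr' x)
    have F6 := congr_arg h (hA' (h x))
    simp only [LinearMap.comp_apply, map_add, map_zero] at F1 F2 F3 F4 F5 F6 ⊢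
    linear_combination (norm := module) F1 + F2 + F3 + F4 + F5 + F6

theorem perturbation_lemma (hR : IsStrongDeformationRetract d δ i π h) {α : Module.End k C}
    (hMC : α ∘ₗ α + d ∘ₗ α + α ∘ₗ d = 0) (hu : IsUnit ((1 : Module.End k C) - h ∘ₗ α)) :
    IsUnit ((1 : Module.End k C) - α ∘ₗ h) ∧
    (let G := Ring.inverse ((1 : Module.End k C) - h ∘ₗ α)
     let G' := Ring.inverse ((1 : Module.End k C) - α ∘ₗ h)
     let β := π ∘ₗ α ∘ₗ G ∘ₗ i
     (β ∘ₗ β + δ ∘ₗ β + β ∘ₗ δ = 0) ∧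
       IsStrongDeformationRetract (d + α) (δ + β) (G ∘ₗ i) (π ∘ₗ G') (G ∘ₗ h)) := by
  set A := perturbationSeries h α
  have hX : d ∘ₗ A + A ∘ₗ d + A ∘ₗ (i ∘ₗ π) ∘ₗ A = 0 := by
    rw [hR.i_comp_π]
    exact perturbationSeries_maurerCartan hu hMC
  have hGi : Ring.inverse (1 - h ∘ₗ α) ∘ₗ i = i + h ∘ₗ A ∘ₗ i := by
    rw [Ring.inverse_one_sub_eq_one_add_mul_inverse hu, LinearMap.add_comp]
    rfl
  have hGh : Ring.inverse (1 - h ∘ₗ α) ∘ₗ h = h + h ∘ₗ A ∘ₗ h := by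
    rw [Ring.inverse_one_sub_eq_one_add_mul_inverse hu, LinearMap.add_comp]
    rfl
  have hπG' : π ∘ₗ Ring.inverse (1 - α ∘ₗ h) = π + π ∘ₗ A ∘ₗ h := by
    rw [← Module.End.mul_eq_comp α h, Ring.inverse_one_sub_mul_comm hu, LinearMap.comp_add]
    rfl
  have hR' := hR.perturb (perturbationSeries_eq_add_mul_mul_self hu)
    (perturbationSeries_eq_add_self_mul_mul hu) hX
  rw [← hGi, ← hGh, ← hπG'] at hR'
  exact ⟨hu.one_sub_mul_comm, hR.maurerCartan_transfer hX, hR'⟩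

end IsStrongDeformationRetract

end Retract

theorem neg_eq_self_of_two_eq_zero {k M : Type*} [Ring k] [AddCommGroup M] [Module k M]
    (h2 : (2 : k) = 0) (x : M) : -x = x := by
  rw [neg_eq_iff_add_eq_zero, ← two_smul k x, h2, zero_smul]

theorem homological_perturbation_lemma_general
    {k : Type*} [CommRing k] (h2 : (2 : k) = 0)
    {C Z : Type*} [AddCommGroup C] [AddCommGroup Z] [Module k C] [Module k Z]
    (d α h : C →ₗ[k] C) (δ : Z →ₗ[k] Z)
    (i : Z →ₗ[k] C) (π : C →ₗ[k] Z)
    (hMC : α ∘ₗ α + d ∘ₗ α + α ∘ₗ d = 0)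
    (hπd : π ∘ₗ d = δ ∘ₗ π) (hdi : d ∘ₗ i = i ∘ₗ δ)
    (hπi : π ∘ₗ i = LinearMap.id)
    (hiπ : i ∘ₗ π = LinearMap.id + d ∘ₗ h + h ∘ₗ d)
    (hhh : h ∘ₗ h = 0) (hhi : h ∘ₗ i = 0) (hπh : π ∘ₗ h = 0)
    (hinv : IsUnit ((1 : Module.End k C) + h ∘ₗ α)) :
    IsUnit ((1 : Module.End k C) + α ∘ₗ h) ∧
    (let G : C →ₗ[k] C := Ring.inverse ((1 : Module.End k C) + h ∘ₗ α)
     let G' : C →ₗ[k] C := Ring.inverse ((1 : Module.End k C) + α ∘ₗ h)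
     let β : Z →ₗ[k] Z := π ∘ₗ α ∘ₗ G ∘ₗ i
     let Pr : C →ₗ[k] Z := π ∘ₗ G'
     let H : C →ₗ[k] C := G ∘ₗ h
     let I : Z →ₗ[k] C := G ∘ₗ i
     (β ∘ₗ β + δ ∘ₗ β + β ∘ₗ δ = 0) ∧
     (Pr ∘ₗ (d + α) = (δ + β) ∘ₗ Pr) ∧
     ((d + α) ∘ₗ I = I ∘ₗ (δ + β)) ∧
     (Pr ∘ₗ I = LinearMap.id) ∧
     (I ∘ₗ Pr = LinearMap.id + (d + α) ∘ₗ H + H ∘ₗ (d + α)) ∧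
     (H ∘ₗ H = 0) ∧ (H ∘ₗ I = 0) ∧ (Pr ∘ₗ H = 0)) := by
  have hsub (f : Module.End k C) : 1 + f = 1 - f := by
    rw [sub_eq_add_neg, neg_eq_self_of_two_eq_zero h2]
  simp only [hsub] at hinv ⊢
  obtain ⟨hu, hβ, hR⟩ := IsStrongDeformationRetract.perturbation_lemma
    ⟨hπd, hdi, hπi, hiπ, hhh, hhi, hπh⟩ hMC hinv
  exact ⟨hu, hβ, hR.π_comp_d, hR.d_comp_i, hR.π_comp_i, hR.i_comp_π, hR.h_comp_h, hR.h_comp_i,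
    hR.π_comp_h⟩

/-- Homological perturbation lemma for chain complexes over a ring in which `2 = 0`. -/
theorem homological_perturbation_lemma
    {k : Type*} [CommRing k] (h2 : (2 : k) = 0)
    {C Z : Type*} [AddCommGroup C] [AddCommGroup Z] [Module k C] [Module k Z]
    (d α h : C →ₗ[k] C) (δ : Z →ₗ[k] Z)
    (i : Z →ₗ[k] C) (π : C →ₗ[k] Z)
    (hdd : d ∘ₗ d = 0) (hδδ : δ ∘ₗ δ = 0)
    (hMC : α ∘ₗ α + d ∘ₗ α + α ∘ₗ d = 0)
    (hπd : π ∘ₗ d = δ ∘ₗ π) (hdi : d ∘ₗ i = i ∘ₗ δ)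
    (hπi : π ∘ₗ i = LinearMap.id)
    (hiπ : i ∘ₗ π = LinearMap.id + d ∘ₗ h + h ∘ₗ d)
    (hhh : h ∘ₗ h = 0) (hhi : h ∘ₗ i = 0) (hπh : π ∘ₗ h = 0)
    (hinv : IsUnit ((1 : Module.End k C) + h ∘ₗ α)) :
    IsUnit ((1 : Module.End k C) + α ∘ₗ h) ∧
    (let G : C →ₗ[k] C := Ring.inverse ((1 : Module.End k C) + h ∘ₗ α)
     let G' : C →ₗ[k] C := Ring.inverse ((1 : Module.End k C) + α ∘ₗ h)
     let β : Z →ₗ[k] Z := π ∘ₗ α ∘ₗ G ∘ₗ i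
     let Pr : C →ₗ[k] Z := π ∘ₗ G'
     let H : C →ₗ[k] C := G ∘ₗ h
     let I : Z →ₗ[k] C := G ∘ₗ i
     (β ∘ₗ β + δ ∘ₗ β + β ∘ₗ δ = 0) ∧
     (Pr ∘ₗ (d + α) = (δ + β) ∘ₗ Pr) ∧
     ((d + α) ∘ₗ I = I ∘ₗ (δ + β)) ∧
     (Pr ∘ₗ I = LinearMap.id) ∧
     (I ∘ₗ Pr = LinearMap.id + (d + α) ∘ₗ H + H ∘ₗ (d + α)) ∧
     (H ∘ₗ H = 0) ∧ (H ∘ₗ I = 0) ∧ (Pr ∘ₗ H = 0)) :=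
  homological_perturbation_lemma_general h2 d α h δ i π hMC hπd hdi hπi hiπ hhh hhi hπh hinv
end

section
/- Relaxed homological perturbation lemma. Let k be a ring in which 2 = 0, let C and Z be k-modules with k-linear maps d : C → C and δ : Z → Z satisfying d ∘ d = 0 and δ ∘ δ = 0, and let α : C → C satisfy α ∘ α + d ∘ α + α ∘ d = 0. Suppose given k-linear maps i : Z → C, π : C → Z and h : C → C satisfying π ∘ d = δ ∘ π, d ∘ i = i ∘ δ, π ∘ i = id_Z, i ∘ π = id_C + d ∘ h + h ∘ d, h ∘ i = 0 and π ∘ h = 0, but with h ∘ h = 0 NOT assumed, and assume id_C + h ∘ α is invertible in the endomorphism ring of C. Then id_C + α ∘ h is also invertible, and, setting β = π ∘ α ∘ (id + h ∘ α)⁻¹ ∘ i, Π = π ∘ (id + α ∘ h)⁻¹, H = (id + h ∘ α)⁻¹ ∘ h, I = (id + h ∘ α)⁻¹ ∘ i and K = Π ∘ h ∘ I, the following hold: β ∘ β + δ ∘ β + β ∘ δ = 0; Π ∘ (d + α) = (δ + β) ∘ Π; (d + α) ∘ I = I ∘ (δ + β); I ∘ Π = id_C + (d + α) ∘ H + H ∘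 (d + α); and Π ∘ I = id_Z + (δ + β) ∘ K + K ∘ (δ + β). In particular Π and I are mutually inverse homotopy equivalences between (C, d + α) and (Z, δ + β). -/
/-!
Everything is expressed through the perturbation series `A = ∑ (α h)ⁿ α`, characterised by
`(1 - α h) A = α = A (1 - h α)`. In terms of it `(1 - h α)⁻¹ = 1 + h A` and
`(1 - α h)⁻¹ = 1 + A h`, so `β = π A i`, `Π = π (1 + A h)`, `I = (1 + h A) i` and
`H = (1 + h A) h`. Multiplying `α α + d α + α d` on the left by the unit `1 - α h` shows that the
perturbation equation is equivalent to `d A + A d + A (i π) A = 0`; the first four identities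
follow from this by expanding, with no use of `h h = 0` (Crainic's argument). For the last one,
the intertwining relations give `(δ + β) K + K (δ + β) = Π ((d + α) h + h (d + α)) I`, and
`Π i = π I = 1`, `Π α h = Π - π`, `h α I = I - i` reduce this to `Π I - 1`. With signs the
argument works over any ring; in characteristic 2, `1 + x = 1 - x`.
-/

structure IsPerturbationSeries {R : Type*} [Ring R] (a b A : R) : Prop where
  one_sub_mul_mul : (1 - a * b) * A = a
  mul_one_sub_mul : A * (1 - b * a) = a

namespace IsPerturbationSeries

variable {R : Type*} [Ring R] {a b A : R}

theorem of_mul_eq_one {G : R} (hGl : G * (1 - b * a) = 1) (hGr : (1 - b * a) * G = 1) :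
    IsPerturbationSeries a b (a * G) where
  one_sub_mul_mul := by
    rw [show (1 - a * b) * (a * G) = a * ((1 - b * a) * G) by noncomm_ring, hGr, mul_one]
  mul_one_sub_mul := by rw [mul_assoc, hGl, mul_one]

theorem one_add_mul_mul (hA : IsPerturbationSeries a b A) : (1 + A * b) * a = A :=
  calc (1 + A * b) * a = A * (1 - b * a) + A * b * a := by rw [hA.mul_one_sub_mul]; noncomm_ring
    _ = A := by noncomm_ring

theorem mul_one_add_mul (hA : IsPerturbationSeries a b A) : a * (1 + b * A) = A :=
  calc a * (1 + b * A) = (1 - a * b) * A + a * b * A := by rw [hA.one_sub_mul_mul]; noncomm_ring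
    _ = A := by noncomm_ring

theorem one_add_mul_mul_one_sub_mul (hA : IsPerturbationSeries a b A) :
    (1 + A * b) * (1 - a * b) = 1 :=
  calc (1 + A * b) * (1 - a * b) = 1 + A * b - (1 + A * b) * a * b := by noncomm_ring
    _ = 1 := by rw [hA.one_add_mul_mul, add_sub_cancel_right]

theorem one_sub_mul_mul_one_add_mul (hA : IsPerturbationSeries a b A) :
    (1 - a * b) * (1 + A * b) = 1 :=
  calc (1 - a * b) * (1 + A * b) = 1 - a * b + (1 - a * b) * A * b := by noncomm_ring
    _ = 1 := by rw [hA.one_sub_mul_mul, sub_add_cancel]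

theorem one_add_mul_mul_one_sub_mul' (hA : IsPerturbationSeries a b A) :
    (1 + b * A) * (1 - b * a) = 1 :=
  calc (1 + b * A) * (1 - b * a) = 1 - b * a + b * (A * (1 - b * a)) := by noncomm_ring
    _ = 1 := by rw [hA.mul_one_sub_mul, sub_add_cancel]

theorem one_sub_mul_mul_one_add_mul' (hA : IsPerturbationSeries a b A) :
    (1 - b * a) * (1 + b * A) = 1 :=
  calc (1 - b * a) * (1 + b * A) = 1 - b * a + b * ((1 - a * b) * A) := by noncomm_ring
    _ = 1 := by rw [hA.one_sub_mul_mul, sub_add_cancel]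

theorem isUnit_one_sub_mul (hA : IsPerturbationSeries a b A) : IsUnit (1 - a * b) :=
  ⟨⟨_, _, hA.one_sub_mul_mul_one_add_mul, hA.one_add_mul_mul_one_sub_mul⟩, rfl⟩

theorem inverse_one_sub_mul (hA : IsPerturbationSeries a b A) :
    Ring.inverse (1 - a * b) = 1 + A * b :=
  Ring.inverse_unit ⟨_, _, hA.one_sub_mul_mul_one_add_mul, hA.one_add_mul_mul_one_sub_mul⟩

theorem inverse_one_sub_mul' (hA : IsPerturbationSeries a b A) :
    Ring.inverse (1 - b * a) = 1 + b * A :=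
  Ring.inverse_unit ⟨_, _, hA.one_sub_mul_mul_one_add_mul', hA.one_add_mul_mul_one_sub_mul'⟩

theorem maurerCartan {d : R} (hA : IsPerturbationSeries a b A)
    (hMC : a * a + d * a + a * d = 0) :
    d * A + A * d + A * (1 + d * b + b * d) * A = 0 := by
  have hleft : (1 - a * b) * (d * A + A * d + A * (1 + d * b + b * d) * A) = 0 :=
    calc (1 - a * b) * (d * A + A * d + A * (1 + d * b + b * d) * A)
        = (a * a + d * a + a * d) * (1 + b * A) + (d + a) * ((1 - a * b) * A - a)
          + ((1 - a * b) * A - a) * (d + (1 + d * b + b * d) * A) := by noncomm_ring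
      _ = 0 := by rw [hMC, hA.one_sub_mul_mul, sub_self]; noncomm_ring
  calc d * A + A * d + A * (1 + d * b + b * d) * A
      = (1 + A * b) * ((1 - a * b) * (d * A + A * d + A * (1 + d * b + b * d) * A)) := by
        rw [← mul_assoc, hA.one_add_mul_mul_one_sub_mul, one_mul]
    _ = 0 := by rw [hleft, mul_zero]

end IsPerturbationSeries

section Perturbation

variable {k C Z : Type*} [Semiring k] [AddCommGroup C] [AddCommGroup Z] [Module k C] [Module k Z]
  {d α h A : Module.End k C} {δ : Module.End k Z} {i : Z →ₗ[k] C} {π : C →ₗ[k] Z}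

theorem comp_homotopy_comp_eq_comp_sub_id {P : C →ₗ[k] Z} {I : Z →ₗ[k] C}
    (hPi : P ∘ₗ i = LinearMap.id) (hπI : π ∘ₗ I = LinearMap.id) (hPαh : P ∘ₗ α ∘ₗ h = P - π)
    (hhαI : h ∘ₗ α ∘ₗ I = I - i) (hiπ : i ∘ₗ π = LinearMap.id + d ∘ₗ h + h ∘ₗ d) :
    (P ∘ₗ (d + α)) ∘ₗ h ∘ₗ I + P ∘ₗ h ∘ₗ ((d + α) ∘ₗ I) = P ∘ₗ I - LinearMap.id := by
  ext z
  have hPi' : P (i z) = z := LinearMap.congr_fun hPi z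
  have hπI' : π (I z) = z := LinearMap.congr_fun hπI z
  have hPαh' : P (α (h (I z))) = P (I z) - π (I z) := LinearMap.congr_fun hPαh (I z)
  have hhαI' : h (α (I z)) = I z - i z := LinearMap.congr_fun hhαI z
  have hhd : h (d (I z)) = i (π (I z)) - I z - d (h (I z)) := by
    have hiπ' : i (π (I z)) = I z + d (h (I z)) + h (d (I z)) :=
      LinearMap.congr_fun hiπ (I z)
    rw [hiπ']
    abel
  simp only [LinearMap.add_apply, LinearMap.sub_apply, LinearMap.comp_apply, LinearMap.id_apply,
    map_add, hPαh', hhαI', hhd, map_sub, hπI', hPi']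
  abel

theorem perturbedProj_comp_incl (hπi : π ∘ₗ i = LinearMap.id) (hhi : h ∘ₗ i = 0) :
    (π ∘ₗ (1 + A * h)) ∘ₗ i = LinearMap.id := by
  ext z
  have hhi' : h (i z) = 0 := LinearMap.congr_fun hhi z
  simpa [hhi'] using LinearMap.congr_fun hπi z

theorem proj_comp_perturbedIncl (hπi : π ∘ₗ i = LinearMap.id) (hπh : π ∘ₗ h = 0) :
    π ∘ₗ ((1 + h * A) ∘ₗ i) = LinearMap.id := by
  ext z
  have hπh' : π (h (A (i z))) = 0 := LinearMap.congr_fun hπh (A (i z))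
  simpa [hπh'] using LinearMap.congr_fun hπi z

theorem IsPerturbationSeries.apply_incl_proj_apply (hA : IsPerturbationSeries α h A)
    (hMC : α ∘ₗ α + d ∘ₗ α + α ∘ₗ d = 0) (hiπ : i ∘ₗ π = LinearMap.id + d ∘ₗ h + h ∘ₗ d)
    (x : C) : A (i (π (A x))) = -(d (A x) + A (d x)) := by
  have key := LinearMap.congr_fun (hA.maurerCartan hMC) x
  rw [← Module.End.one_eq_id, ← Module.End.mul_eq_comp, ← Module.End.mul_eq_comp] at hiπ
  rw [← hiπ] at key
  simp only [LinearMap.add_apply, Module.End.mul_apply, LinearMap.comp_apply,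
    LinearMap.zero_apply] at key
  rw [eq_neg_iff_add_eq_zero, add_comm]
  exact key

theorem IsPerturbationSeries.transferred_maurerCartan (hA : IsPerturbationSeries α h A)
    (hMC : α ∘ₗ α + d ∘ₗ α + α ∘ₗ d = 0) (hπd : π ∘ₗ d = δ ∘ₗ π) (hdi : d ∘ₗ i = i ∘ₗ δ)
    (hiπ : i ∘ₗ π = LinearMap.id + d ∘ₗ h + h ∘ₗ d) :
    (π ∘ₗ A ∘ₗ i) ∘ₗ (π ∘ₗ A ∘ₗ i) + δ ∘ₗ (π ∘ₗ A ∘ₗ i) + (π ∘ₗ A ∘ₗ i) ∘ₗ δ = 0 := by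
  ext z
  have hπd' (x : C) : π (d x) = δ (π x) := LinearMap.congr_fun hπd x
  have hdi' (z : Z) : d (i z) = i (δ z) := LinearMap.congr_fun hdi z
  simp only [LinearMap.add_apply, LinearMap.comp_apply, LinearMap.zero_apply,
    hA.apply_incl_proj_apply hMC hiπ, map_neg, map_add, hπd', hdi']
  abel

theorem IsPerturbationSeries.perturbedProj_intertwines (hA : IsPerturbationSeries α h A)
    (hMC : α ∘ₗ α + d ∘ₗ α + α ∘ₗ d = 0) (hπd : π ∘ₗ d = δ ∘ₗ π)
    (hiπ : i ∘ₗ π = LinearMap.id + d ∘ₗ h + h ∘ₗ d) :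
    (π ∘ₗ (1 + A * h)) ∘ₗ (d + α) = (δ + π ∘ₗ A ∘ₗ i) ∘ₗ (π ∘ₗ (1 + A * h)) := by
  ext x
  have hπd' (x : C) : π (d x) = δ (π x) := LinearMap.congr_fun hπd x
  have hiπ' (x : C) : i (π x) = x + d (h x) + h (d x) := LinearMap.congr_fun hiπ x
  have hAr : α x + A (h (α x)) = A x := LinearMap.congr_fun hA.one_add_mul_mul x
  simp only [LinearMap.add_apply, LinearMap.comp_apply, Module.End.mul_apply,
    Module.End.one_apply, map_add, hA.apply_incl_proj_apply hMC hiπ]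
  simp only [hiπ', map_add, map_neg, hπd', ← hAr]
  abel

theorem IsPerturbationSeries.perturbedIncl_intertwines (hA : IsPerturbationSeries α h A)
    (hMC : α ∘ₗ α + d ∘ₗ α + α ∘ₗ d = 0) (hdi : d ∘ₗ i = i ∘ₗ δ)
    (hiπ : i ∘ₗ π = LinearMap.id + d ∘ₗ h + h ∘ₗ d) :
    (d + α) ∘ₗ ((1 + h * A) ∘ₗ i) = ((1 + h * A) ∘ₗ i) ∘ₗ (δ + π ∘ₗ A ∘ₗ i) := by
  ext z
  have hdi' (z : Z) : d (i z) = i (δ z) := LinearMap.congr_fun hdi z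
  have hiπ' (x : C) : i (π x) = x + d (h x) + h (d x) := LinearMap.congr_fun hiπ x
  have hAl : α (i z) = A (i z) - α (h (A (i z))) := by
    rw [eq_sub_iff_add_eq, ← map_add]; exact LinearMap.congr_fun hA.mul_one_add_mul (i z)
  simp only [LinearMap.add_apply, LinearMap.comp_apply, Module.End.mul_apply,
    Module.End.one_apply, map_add, hA.apply_incl_proj_apply hMC hiπ]
  simp only [hiπ', map_add, map_neg, hdi', hAl]
  abel

theorem IsPerturbationSeries.perturbedIncl_comp_perturbedProj
    (hA : IsPerturbationSeries α h A) (hMC : α ∘ₗ α + d ∘ₗ α + α ∘ₗ d = 0)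
    (hiπ : i ∘ₗ π = LinearMap.id + d ∘ₗ h + h ∘ₗ d) :
    ((1 + h * A) ∘ₗ i) ∘ₗ (π ∘ₗ (1 + A * h))
      = LinearMap.id + (d + α) ∘ₗ ((1 + h * A) * h) + ((1 + h * A) * h) ∘ₗ (d + α) := by
  ext x
  have hiπ' (x : C) : i (π x) = x + d (h x) + h (d x) := LinearMap.congr_fun hiπ x
  have hAl : α (h x) = A (h x) - α (h (A (h x))) := by
    rw [eq_sub_iff_add_eq, ← map_add]; exact LinearMap.congr_fun hA.mul_one_add_mul (h x)
  have hAr : α x + A (h (α x)) = A x := LinearMap.congr_fun hA.one_add_mul_mul x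
  simp only [LinearMap.add_apply, LinearMap.comp_apply, Module.End.mul_apply,
    Module.End.one_apply, LinearMap.id_apply, map_add, hA.apply_incl_proj_apply hMC hiπ]
  simp only [hiπ', map_add, map_neg, hAl, ← hAr]
  abel

theorem IsPerturbationSeries.perturbedProj_comp_perturbedIncl
    (hA : IsPerturbationSeries α h A) (hMC : α ∘ₗ α + d ∘ₗ α + α ∘ₗ d = 0)
    (hπd : π ∘ₗ d = δ ∘ₗ π) (hdi : d ∘ₗ i = i ∘ₗ δ)
    (hπi : π ∘ₗ i = LinearMap.id) (hiπ : i ∘ₗ π = LinearMap.id + d ∘ₗ h + h ∘ₗ d)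
    (hhi : h ∘ₗ i = 0) (hπh : π ∘ₗ h = 0) :
    (π ∘ₗ (1 + A * h)) ∘ₗ ((1 + h * A) ∘ₗ i) = LinearMap.id
      + (δ + π ∘ₗ A ∘ₗ i) ∘ₗ ((π ∘ₗ (1 + A * h)) ∘ₗ h ∘ₗ ((1 + h * A) ∘ₗ i))
      + ((π ∘ₗ (1 + A * h)) ∘ₗ h ∘ₗ ((1 + h * A) ∘ₗ i)) ∘ₗ (δ + π ∘ₗ A ∘ₗ i) := by
  have hPαh : (π ∘ₗ (1 + A * h)) ∘ₗ α ∘ₗ h = π ∘ₗ (1 + A * h) - π := by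
    ext x
    have hAr : α (h x) + A (h (α (h x))) = A (h x) :=
      LinearMap.congr_fun hA.one_add_mul_mul (h x)
    simp only [LinearMap.comp_apply, LinearMap.sub_apply, LinearMap.add_apply,
      Module.End.mul_apply, Module.End.one_apply, map_add, hAr, add_sub_cancel_left]
  have hhαI : h ∘ₗ α ∘ₗ ((1 + h * A) ∘ₗ i) = (1 + h * A) ∘ₗ i - i := by
    ext z
    have hAl : α (i z + h (A (i z))) = A (i z) :=
      LinearMap.congr_fun hA.mul_one_add_mul (i z)
    simp only [LinearMap.comp_apply, LinearMap.sub_apply, LinearMap.add_apply,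
      Module.End.mul_apply, Module.End.one_apply, hAl, add_sub_cancel_left]
  have key := comp_homotopy_comp_eq_comp_sub_id (perturbedProj_comp_incl hπi hhi)
    (proj_comp_perturbedIncl hπi hπh) hPαh hhαI hiπ
  rw [hA.perturbedProj_intertwines hMC hπd hiπ, hA.perturbedIncl_intertwines hMC hdi hiπ] at key
  simp only [LinearMap.comp_assoc] at key ⊢
  rw [add_assoc, key]
  abel

end Perturbation

theorem relaxed_perturbation_lemma {k C Z : Type*} [Semiring k] [AddCommGroup C]
    [AddCommGroup Z] [Module k C] [Module k Z] (d α h : C →ₗ[k] C) (δ : Z →ₗ[k] Z)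
    (i : Z →ₗ[k] C) (π : C →ₗ[k] Z) (hMC : α ∘ₗ α + d ∘ₗ α + α ∘ₗ d = 0)
    (hπd : π ∘ₗ d = δ ∘ₗ π) (hdi : d ∘ₗ i = i ∘ₗ δ)
    (hπi : π ∘ₗ i = LinearMap.id) (hiπ : i ∘ₗ π = LinearMap.id + d ∘ₗ h + h ∘ₗ d)
    (hhi : h ∘ₗ i = 0) (hπh : π ∘ₗ h = 0) (hinv : IsUnit ((1 : Module.End k C) - h ∘ₗ α)) :
    IsUnit ((1 : Module.End k C) - α ∘ₗ h) ∧
    (let G : C →ₗ[k] C := Ring.inverse ((1 : Module.End k C) - h ∘ₗ α)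
     let G' : C →ₗ[k] C := Ring.inverse ((1 : Module.End k C) - α ∘ₗ h)
     let β : Z →ₗ[k] Z := π ∘ₗ α ∘ₗ G ∘ₗ i
     let Pr : C →ₗ[k] Z := π ∘ₗ G'
     let H : C →ₗ[k] C := G ∘ₗ h
     let I : Z →ₗ[k] C := G ∘ₗ i
     let K : Z →ₗ[k] Z := Pr ∘ₗ h ∘ₗ I
     (β ∘ₗ β + δ ∘ₗ β + β ∘ₗ δ = 0) ∧
     (Pr ∘ₗ (d + α) = (δ + β) ∘ₗ Pr) ∧
     ((d + α) ∘ₗ I = I ∘ₗ (δ + β)) ∧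
     (I ∘ₗ Pr = LinearMap.id + (d + α) ∘ₗ H + H ∘ₗ (d + α)) ∧
     (Pr ∘ₗ I = LinearMap.id + (δ + β) ∘ₗ K + K ∘ₗ (δ + β))) := by
  obtain ⟨A, hA, hαG⟩ : ∃ A, IsPerturbationSeries α h A ∧
      α ∘ₗ Ring.inverse ((1 : Module.End k C) - h ∘ₗ α) = A :=
    ⟨_, .of_mul_eq_one (Ring.inverse_mul_cancel _ hinv) (Ring.mul_inverse_cancel _ hinv), rfl⟩
  have hβ : π ∘ₗ α ∘ₗ Ring.inverse ((1 : Module.End k C) - h ∘ₗ α) ∘ₗ i = π ∘ₗ A ∘ₗ i := by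
    rw [← hαG]; rfl
  have hG : Ring.inverse ((1 : Module.End k C) - h ∘ₗ α) = 1 + h * A :=
    hA.inverse_one_sub_mul'
  have hG' : Ring.inverse ((1 : Module.End k C) - α ∘ₗ h) = 1 + A * h :=
    hA.inverse_one_sub_mul
  refine ⟨hA.isUnit_one_sub_mul, ?_⟩
  dsimp only
  rw [hβ, hG, hG']
  exact ⟨hA.transferred_maurerCartan hMC hπd hdi hiπ, hA.perturbedProj_intertwines hMC hπd hiπ,
    hA.perturbedIncl_intertwines hMC hdi hiπ, hA.perturbedIncl_comp_perturbedProj hMC hiπ,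
    hA.perturbedProj_comp_perturbedIncl hMC hπd hdi hπi hiπ hhi hπh⟩

theorem add_eq_sub_of_two_eq_zero {k M : Type*} [Semiring k] [AddCommGroup M] [Module k M]
    (h2 : (2 : k) = 0) (x y : M) : x + y = x - y := by
  rw [sub_eq_add_neg, neg_eq_of_add_eq_zero_left (a := y)]
  rw [← two_smul k, h2, zero_smul]

theorem relaxed_homological_perturbation_lemma_general
    {k : Type*} [CommRing k] (h2 : (2 : k) = 0)
    {C Z : Type*} [AddCommGroup C] [AddCommGroup Z] [Module k C] [Module k Z]
    (d α h : C →ₗ[k] C) (δ : Z →ₗ[k] Z)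
    (i : Z →ₗ[k] C) (π : C →ₗ[k] Z)
    (hMC : α ∘ₗ α + d ∘ₗ α + α ∘ₗ d = 0)
    (hπd : π ∘ₗ d = δ ∘ₗ π) (hdi : d ∘ₗ i = i ∘ₗ δ)
    (hπi : π ∘ₗ i = LinearMap.id)
    (hiπ : i ∘ₗ π = LinearMap.id + d ∘ₗ h + h ∘ₗ d)
    (hhi : h ∘ₗ i = 0) (hπh : π ∘ₗ h = 0)
    (hinv : IsUnit ((1 : Module.End k C) + h ∘ₗ α)) :
    IsUnit ((1 : Module.End k C) + α ∘ₗ h) ∧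
    (let G : C →ₗ[k] C := Ring.inverse ((1 : Module.End k C) + h ∘ₗ α)
     let G' : C →ₗ[k] C := Ring.inverse ((1 : Module.End k C) + α ∘ₗ h)
     let β : Z →ₗ[k] Z := π ∘ₗ α ∘ₗ G ∘ₗ i
     let Pr : C →ₗ[k] Z := π ∘ₗ G'
     let H : C →ₗ[k] C := G ∘ₗ h
     let I : Z →ₗ[k] C := G ∘ₗ i
     let K : Z →ₗ[k] Z := Pr ∘ₗ h ∘ₗ I
     (β ∘ₗ β + δ ∘ₗ β + β ∘ₗ δ = 0) ∧
     (Pr ∘ₗ (d + α) = (δ + β) ∘ₗ Pr) ∧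
     ((d + α) ∘ₗ I = I ∘ₗ (δ + β)) ∧
     (I ∘ₗ Pr = LinearMap.id + (d + α) ∘ₗ H + H ∘ₗ (d + α)) ∧
     (Pr ∘ₗ I = LinearMap.id + (δ + β) ∘ₗ K + K ∘ₗ (δ + β))) := by
  simp only [add_eq_sub_of_two_eq_zero h2 (1 : Module.End k C)] at hinv ⊢
  exact relaxed_perturbation_lemma d α h δ i π hMC hπd hdi hπi hiπ hhi hπh hinv

/-- Relaxed homological perturbation lemma (side condition `h ∘ h = 0` dropped),
with Markl's explicit homotopy `K = Π ∘ h ∘ I`. -/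
theorem relaxed_homological_perturbation_lemma
    {k : Type*} [CommRing k] (h2 : (2 : k) = 0)
    {C Z : Type*} [AddCommGroup C] [AddCommGroup Z] [Module k C] [Module k Z]
    (d α h : C →ₗ[k] C) (δ : Z →ₗ[k] Z)
    (i : Z →ₗ[k] C) (π : C →ₗ[k] Z)
    (hdd : d ∘ₗ d = 0) (hδδ : δ ∘ₗ δ = 0)
    (hMC : α ∘ₗ α + d ∘ₗ α + α ∘ₗ d = 0)
    (hπd : π ∘ₗ d = δ ∘ₗ π) (hdi : d ∘ₗ i = i ∘ₗ δ)
    (hπi : π ∘ₗ i = LinearMap.id)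
    (hiπ : i ∘ₗ π = LinearMap.id + d ∘ₗ h + h ∘ₗ d)
    (hhi : h ∘ₗ i = 0) (hπh : π ∘ₗ h = 0)
    (hinv : IsUnit ((1 : Module.End k C) + h ∘ₗ α)) :
    IsUnit ((1 : Module.End k C) + α ∘ₗ h) ∧
    (let G : C →ₗ[k] C := Ring.inverse ((1 : Module.End k C) + h ∘ₗ α)
     let G' : C →ₗ[k] C := Ring.inverse ((1 : Module.End k C) + α ∘ₗ h)
     let β : Z →ₗ[k] Z := π ∘ₗ α ∘ₗ G ∘ₗ i
     let Pr : C →ₗ[k] Z := π ∘ₗ G'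
     let H : C →ₗ[k] C := G ∘ₗ h
     let I : Z →ₗ[k] C := G ∘ₗ i
     let K : Z →ₗ[k] Z := Pr ∘ₗ h ∘ₗ I
     (β ∘ₗ β + δ ∘ₗ β + β ∘ₗ δ = 0) ∧
     (Pr ∘ₗ (d + α) = (δ + β) ∘ₗ Pr) ∧
     ((d + α) ∘ₗ I = I ∘ₗ (δ + β)) ∧
     (I ∘ₗ Pr = LinearMap.id + (d + α) ∘ₗ H + H ∘ₗ (d + α)) ∧
     (Pr ∘ₗ I = LinearMap.id + (δ + β) ∘ₗ K + K ∘ₗ (δ + β))) :=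
  relaxed_homological_perturbation_lemma_general h2 d α h δ i π hMC hπd hdi hπi hiπ hhi hπh hinv
end

section
/- The differential of a staircase complex is injective; hence a staircase complex is a free resolution of its homology. Let R = F2[W,Z], let n ∈ ℕ, and let α, β : Fin n → ℕ satisfy α i ≥ 1 and β i ≥ 1 for all i. Let d : R^n → R^{n+1} be the R-linear map defined on the standard bases (e_i)_{i<n} of R^n and (f_j)_{j≤n} of R^{n+1} by d(e_i) = W^{α i}·f_i + Z^{β i}·f_{i+1}. Then d is injective. -/
local notation "R" => MvPolynomial (Fin 2) (ZMod 2)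
local notation "W" => (MvPolynomial.X 0 : MvPolynomial (Fin 2) (ZMod 2))
local notation "Z" => (MvPolynomial.X 1 : MvPolynomial (Fin 2) (ZMod 2))

/-!
The matrix of `d` is lower bidiagonal, with the non-zero-divisors `W ^ α i` on the diagonal.
Forward substitution therefore kills the kernel: if `d x = 0` and `x` vanishes below `k`, the
`k`-th coordinate of `d x` is `x k * W ^ α k`, so `x k = 0` as well.
-/

open scoped nonZeroDivisors

section Bidiagonal

variable {S : Type*} [CommRing S] {n : ℕ} {a b : Fin n → S}
  {d : (Fin n → S) →ₗ[S] (Fin (n + 1) → S)}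

theorem bidiagonal_apply_castSucc_of_forall_lt_eq_zero
    (hd : ∀ i, d (Pi.single i 1) = Pi.single i.castSucc (a i) + Pi.single i.succ (b i))
    {x : Fin n → S} {k : Fin n} (hx : ∀ i < k, x i = 0) :
    d x k.castSucc = x k * a k := by
  conv_lhs => rw [pi_eq_sum_univ' x, map_sum, Finset.sum_apply]
  rw [Finset.sum_eq_single k]
  · simp [hd, k.castSucc_lt_succ.ne]
  · intro i _ hik
    rcases hik.lt_or_gt with hlt | hgt
    · simp [hx i hlt]
    · have hsucc : k.castSucc ≠ i.succ := by simp [Fin.ext_iff]; omega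
      simp [hd, hgt.ne', hsucc]
  · simp

theorem bidiagonal_injective_of_mem_nonZeroDivisors
    (hd : ∀ i, d (Pi.single i 1) = Pi.single i.castSucc (a i) + Pi.single i.succ (b i))
    (ha : ∀ i, a i ∈ S⁰) : Function.Injective d := by
  refine (injective_iff_map_eq_zero d).2 fun x hx ↦ funext fun k ↦ ?_
  induction k using WellFoundedLT.induction with
  | ind k ih =>
    have h := bidiagonal_apply_castSucc_of_forall_lt_eq_zero hd ih
    rwa [hx, Pi.zero_apply, eq_comm, mul_right_mem_nonZeroDivisors_eq_zero_iff (ha k)] at h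

end Bidiagonal

theorem staircase_differential_injective_general
    (n : ℕ) (α β : Fin n → ℕ)
    (d : (Fin n → R) →ₗ[R] (Fin (n + 1) → R))
    (hd : ∀ i : Fin n, d (Pi.single i 1) =
      Pi.single i.castSucc (W ^ α i) + Pi.single i.succ (Z ^ β i)) :
    Function.Injective d :=
  bidiagonal_injective_of_mem_nonZeroDivisors hd fun _ ↦
    mem_nonZeroDivisors_of_ne_zero (pow_ne_zero _ (MvPolynomial.X_ne_zero _))

/-- The differential of a staircase complex over `F₂[W,Z]` is injective. -/
theorem staircase_differential_injective
    (n : ℕ) (α β : Fin n → ℕ) (hα : ∀ i, 1 ≤ α i) (hβ : ∀ i, 1 ≤ β i)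
    (d : (Fin n → R) →ₗ[R] (Fin (n + 1) → R))
    (hd : ∀ i : Fin n, d (Pi.single i 1) =
      Pi.single i.castSucc (W ^ α i) + Pi.single i.succ (Z ^ β i)) :
    Function.Injective d :=
  staircase_differential_injective_general n α β d hd
end

section
/- The homology of a staircase complex is a monomial ideal. Let R = F2[W,Z], n ∈ ℕ, and let α, β : Fin n → ℕ with α i ≥ 1 and β i ≥ 1 define the staircase differential d : R^n → R^{n+1}, d(e_i) = W^{α i}·f_i + Z^{β i}·f_{i+1}. For j = 0, …, n set A_j = Σ_{k<j} α k and B_j = Σ_{k≥j} β k, and define the R-linear map g : R^{n+1} → R by g(f_j) = W^{A_j} Z^{B_j}. Then: (1) g ∘ d = 0; (2) ker(g) = range(d); and (3) range(g) equals the ideal of R generated by the monomials W^{A_j} Z^{B_j} for j = 0, …, n. Consequently g induces an isomorphism of R-modules from the homology coker(d) = R^{n+1}/range(d) of the staircase complex onto this monomial ideal. -/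
local notation "R" => MvPolynomial (Fin 2) (ZMod 2)
local notation "W" => (MvPolynomial.X 0 : MvPolynomial (Fin 2) (ZMod 2))
local notation "Z" => (MvPolynomial.X 1 : MvPolynomial (Fin 2) (ZMod 2))

open MvPolynomial Finset

private lemma prime_Z' : Prime (Z) := by
  rw [← MulEquiv.prime_iff (((renameEquiv (ZMod 2) (Equiv.swap (0:Fin 2) 1)).trans
    (finSuccEquiv (ZMod 2) 1)).toMulEquiv)]
  have : (((renameEquiv (ZMod 2) (Equiv.swap (0:Fin 2) 1)).trans
      (finSuccEquiv (ZMod 2) 1)).toMulEquiv) (X 1) = Polynomial.X := by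
    simp [Equiv.swap_apply_right, MvPolynomial.finSuccEquiv_X_zero]
  rw [this]
  exact Polynomial.prime_X

private lemma not_Z_dvd_W_pow' (a : ℕ) : ¬ (Z ∣ W ^ a) := by
  intro h
  obtain ⟨q, hq⟩ := prime_Z'.dvd_of_dvd_pow (n := a) h
  have h2 := congrArg (MvPolynomial.eval (fun i : Fin 2 => if i = 0 then (1 : ZMod 2) else 0)) hq
  simp at h2

private lemma htwo' : (2 : R) = 0 := CharTwo.two_eq_zero

private lemma key' (n : ℕ) (α β : ℕ → ℕ) :
    ∀ v : ℕ → R,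
    (∑ j ∈ Finset.range (n+1), v j *
      (W ^ (∑ k ∈ Finset.range j, α k) * Z ^ (∑ k ∈ Finset.Ico j n, β k)) = 0) →
    ∃ c : ℕ → R, ∀ j ≤ n,
      v j = (if j < n then c j * W ^ α j else 0) +
        (if 0 < j then c (j-1) * Z ^ β (j-1) else 0) := by
  induction n with
  | zero =>
    intro v hv
    simp at hv
    exact ⟨0, by intro j hj; interval_cases j; simpa using hv⟩
  | succ n ih =>
    intro v hv
    rw [Finset.sum_range_succ] at hv
    set T : R := ∑ j ∈ Finset.range (n+1), v j *
      (W ^ (∑ k ∈ Finset.range j, α k) * Z ^ (∑ k ∈ Finset.Ico j n, β k)) with hT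
    have hsum : (∑ j ∈ Finset.range (n+1), v j *
        (W ^ (∑ k ∈ Finset.range j, α k) * Z ^ (∑ k ∈ Finset.Ico j (n+1), β k)))
        = T * Z ^ β n := by
      rw [hT, Finset.sum_mul]
      apply Finset.sum_congr rfl
      intro j hj
      rw [Finset.mem_range] at hj
      rw [Finset.sum_Ico_succ_top (by omega : j ≤ n), pow_add]
      ring
    rw [hsum] at hv
    have hlast : ∑ k ∈ Finset.Ico (n+1) (n+1), β k = 0 := by simp
    rw [hlast, pow_zero, mul_one] at hv
    have hv2 : v (n+1) * W ^ (∑ k ∈ Finset.range (n+1), α k) = T * Z ^ β n := by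
      linear_combination hv - (T * Z ^ β n) * htwo'
    have hdvd : (Z : MvPolynomial (Fin 2) (ZMod 2)) ^ β n ∣ v (n+1) := by
      apply Prime.pow_dvd_of_dvd_mul_right prime_Z' _
        (not_Z_dvd_W_pow' (∑ k ∈ Finset.range (n+1), α k))
      exact ⟨T, by linear_combination hv2⟩
    obtain ⟨u, hu⟩ := hdvd
    have hT2 : T + u * W ^ (∑ k ∈ Finset.range (n+1), α k) = 0 := by
      have hz : (Z : MvPolynomial (Fin 2) (ZMod 2)) ^ β n ≠ 0 :=
        pow_ne_zero _ (MvPolynomial.X_ne_zero 1)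
      have key : (T + u * W ^ (∑ k ∈ Finset.range (n+1), α k)) * Z ^ β n = 0 := by
        linear_combination (W ^ (∑ k ∈ Finset.range (n+1), α k)) * hu - hv2
          + (u * W ^ (∑ k ∈ Finset.range (n+1), α k) * Z ^ β n) * htwo'
      rcases mul_eq_zero.mp key with h | h
      · exact h
      · exact absurd h hz
    set v' : ℕ → R := fun j => if j = n then v n + u * W ^ α n else v j with hv'
    have hv'sum : ∑ j ∈ Finset.range (n+1), v' j *
        (W ^ (∑ k ∈ Finset.range j, α k) * Z ^ (∑ k ∈ Finset.Ico j n, β k)) = 0 := by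
      rw [Finset.sum_range_succ]
      have e1 : ∀ j ∈ Finset.range n, v' j *
          (W ^ (∑ k ∈ Finset.range j, α k) * Z ^ (∑ k ∈ Finset.Ico j n, β k)) =
          v j * (W ^ (∑ k ∈ Finset.range j, α k) * Z ^ (∑ k ∈ Finset.Ico j n, β k)) := by
        intro j hj
        rw [Finset.mem_range] at hj
        simp [hv', Nat.ne_of_lt hj]
      rw [Finset.sum_congr rfl e1]
      have e2 : v' n = v n + u * W ^ α n := by simp [hv']
      have e3 : ∑ k ∈ Finset.Ico n n, β k = 0 := by simp
      have hTsplit : T = (∑ j ∈ Finset.range n, v j *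
          (W ^ (∑ k ∈ Finset.range j, α k) * Z ^ (∑ k ∈ Finset.Ico j n, β k)))
          + v n * (W ^ (∑ k ∈ Finset.range n, α k) * Z ^ (∑ k ∈ Finset.Ico n n, β k)) := by
        rw [hT, Finset.sum_range_succ]
      rw [e2, e3, pow_zero, mul_one]
      have hWsplit : (W : MvPolynomial (Fin 2) (ZMod 2)) ^ (∑ k ∈ Finset.range (n+1), α k)
          = W ^ (∑ k ∈ Finset.range n, α k) * W ^ α n := by
        rw [Finset.sum_range_succ, pow_add]
      rw [e3, pow_zero, mul_one] at hTsplit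
      rw [hWsplit] at hT2
      linear_combination hT2 - hTsplit
    obtain ⟨c', hc'⟩ := ih v' hv'sum
    refine ⟨fun j => if j = n then u else c' j, ?_⟩
    intro j hj
    simp only []
    by_cases hje : j = n + 1
    · subst hje
      rw [if_neg (lt_irrefl (n+1)), if_pos (Nat.succ_pos n), Nat.add_sub_cancel, if_pos rfl]
      linear_combination hu
    · by_cases hjn2 : j = n
      · subst hjn2
        have hcj := hc' j le_rfl
        have hv'j : v' j = v j + u * W ^ α j := by simp [hv']
        rw [hv'j, if_neg (lt_irrefl j)] at hcj
        rw [if_pos (Nat.lt_succ_self j), if_pos rfl]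
        by_cases h0 : 0 < j
        · rw [if_pos h0] at hcj ⊢
          rw [if_neg (by omega : ¬ (j - 1 = j))]
          linear_combination hcj - (u * W ^ α j) * htwo'
        · rw [if_neg h0] at hcj ⊢
          linear_combination hcj - (u * W ^ α j) * htwo'
      · have hjlt : j < n := by omega
        have hcj := hc' j (by omega)
        have hv'j : v' j = v j := by simp [hv', hjn2]
        rw [hv'j, if_pos hjlt] at hcj
        rw [if_pos (by omega : j < n + 1), if_neg hjn2]
        by_cases h0 : 0 < j
        · rw [if_pos h0] at hcj ⊢
          rw [if_neg (by omega : ¬ (j - 1 = n))]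
          exact hcj
        · rw [if_neg h0] at hcj ⊢
          exact hcj

private lemma sum_filter_lt' (n : ℕ) (f : Fin n → ℕ) (fN : ℕ → ℕ)
    (hfN : ∀ (i : ℕ) (h : i < n), fN i = f ⟨i, h⟩) (m : ℕ) (hm : m ≤ n) :
    ∑ k ∈ Finset.univ.filter (fun k : Fin n => (k : ℕ) < m), f k =
      ∑ i ∈ Finset.range m, fN i := by
  rw [Finset.sum_filter]
  have h1 : ∀ k : Fin n, (if (k : ℕ) < m then f k else 0) =
      (fun i => if i < m then fN i else 0) (k : ℕ) := by
    intro k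
    by_cases h : (k : ℕ) < m <;> simp [h, hfN]
  rw [Finset.sum_congr rfl (fun k _ => h1 k),
    Fin.sum_univ_eq_sum_range (fun i => if i < m then fN i else 0) n, ← Finset.sum_filter]
  congr 1
  ext x
  simp only [Finset.mem_filter, Finset.mem_range]
  omega

private lemma sum_filter_ge' (n : ℕ) (f : Fin n → ℕ) (fN : ℕ → ℕ)
    (hfN : ∀ (i : ℕ) (h : i < n), fN i = f ⟨i, h⟩) (m : ℕ) :
    ∑ k ∈ Finset.univ.filter (fun k : Fin n => m ≤ (k : ℕ)), f k =
      ∑ i ∈ Finset.Ico m n, fN i := by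
  rw [Finset.sum_filter]
  have h1 : ∀ k : Fin n, (if m ≤ (k : ℕ) then f k else 0) =
      (fun i => if m ≤ i then fN i else 0) (k : ℕ) := by
    intro k
    by_cases h : m ≤ (k : ℕ) <;> simp [h, hfN]
  rw [Finset.sum_congr rfl (fun k _ => h1 k),
    Fin.sum_univ_eq_sum_range (fun i => if m ≤ i then fN i else 0) n, ← Finset.sum_filter]
  congr 1
  ext x
  simp only [Finset.mem_filter, Finset.mem_range, Finset.mem_Ico]
  omega

/-- The homology of a staircase complex over `F₂[W,Z]` is a monomial ideal:
the map `g` sending `f_j ↦ W^{A_j} Z^{B_j}` satisfies `g ∘ d = 0`, `ker g = range d`,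
and `range g` is the ideal generated by the monomials `W^{A_j} Z^{B_j}`. -/
theorem staircase_homology_is_monomial_ideal
    (n : ℕ) (α β : Fin n → ℕ) (hα : ∀ i, 1 ≤ α i) (hβ : ∀ i, 1 ≤ β i)
    (A B : Fin (n + 1) → ℕ)
    (hA : ∀ j, A j = ∑ k ∈ Finset.univ.filter (fun k : Fin n => (k : ℕ) < (j : ℕ)), α k)
    (hB : ∀ j, B j = ∑ k ∈ Finset.univ.filter (fun k : Fin n => (j : ℕ) ≤ (k : ℕ)), β k)
    (d : (Fin n → R) →ₗ[R] (Fin (n + 1) → R))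
    (hd : ∀ i : Fin n, d (Pi.single i 1) =
      Pi.single i.castSucc (W ^ α i) + Pi.single i.succ (Z ^ β i))
    (g : (Fin (n + 1) → R) →ₗ[R] R)
    (hg : ∀ j : Fin (n + 1), g (Pi.single j 1) = W ^ A j * Z ^ B j) :
    g ∘ₗ d = 0 ∧
    LinearMap.ker g = LinearMap.range d ∧
    LinearMap.range g =
      Ideal.span (Set.range fun j : Fin (n + 1) => W ^ A j * Z ^ B j) := by
  classical
  set αN : ℕ → ℕ := fun i => if h : i < n then α ⟨i, h⟩ else 0 with hαN
  set βN : ℕ → ℕ := fun i => if h : i < n then β ⟨i, h⟩ else 0 with hβN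
  have hαNa : ∀ (i : ℕ) (h : i < n), αN i = α ⟨i, h⟩ := fun i h => by simp [hαN, h]
  have hβNa : ∀ (i : ℕ) (h : i < n), βN i = β ⟨i, h⟩ := fun i h => by simp [hβN, h]
  have hAeq : ∀ j : Fin (n+1), A j = ∑ i ∈ Finset.range (j : ℕ), αN i := by
    intro j
    rw [hA j, sum_filter_lt' n α αN hαNa (j : ℕ) (by omega)]
  have hBeq : ∀ j : Fin (n+1), B j = ∑ i ∈ Finset.Ico (j : ℕ) n, βN i := by
    intro j
    rw [hB j, sum_filter_ge' n β βN hβNa (j : ℕ)]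
  have hb : ∀ m : ℕ, ∀ i : Fin m, (Pi.basisFun (MvPolynomial (Fin 2) (ZMod 2)) (Fin m)) i
      = Pi.single i (1 : MvPolynomial (Fin 2) (ZMod 2)) := by
    intro m i; simp
  have hsingle : ∀ (m : ℕ) (j : Fin m) (p : MvPolynomial (Fin 2) (ZMod 2)),
      (Pi.single j p : Fin m → MvPolynomial (Fin 2) (ZMod 2)) =
        p • (Pi.single j 1 : Fin m → MvPolynomial (Fin 2) (ZMod 2)) := by
    intro m j p
    rw [← Pi.single_smul, smul_eq_mul, mul_one]
  -- step identities
  have hAstep : ∀ i : Fin n, A i.succ = A i.castSucc + α i := by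
    intro i
    rw [hAeq, hAeq]
    have : ((i.succ : Fin (n+1)) : ℕ) = (i : ℕ) + 1 := rfl
    rw [this, Finset.sum_range_succ]
    have : ((i.castSucc : Fin (n+1)) : ℕ) = (i : ℕ) := rfl
    rw [this, hαNa i i.isLt]
  have hBstep : ∀ i : Fin n, B i.castSucc = B i.succ + β i := by
    intro i
    rw [hBeq, hBeq]
    have h1 : ((i.castSucc : Fin (n+1)) : ℕ) = (i : ℕ) := rfl
    have h2 : ((i.succ : Fin (n+1)) : ℕ) = (i : ℕ) + 1 := rfl
    rw [h1, h2, Finset.sum_eq_sum_Ico_succ_bot i.isLt, hβNa i i.isLt, add_comm]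
  -- Part 1
  have part1 : g ∘ₗ d = 0 := by
    apply Module.Basis.ext (Pi.basisFun (MvPolynomial (Fin 2) (ZMod 2)) (Fin n))
    intro i
    rw [hb n i]
    simp only [LinearMap.comp_apply, LinearMap.zero_apply]
    rw [hd i, map_add, hsingle _ _ (W ^ α i), hsingle _ _ (Z ^ β i), map_smul, map_smul,
      hg, hg, smul_eq_mul, smul_eq_mul, hAstep i, hBstep i]
    linear_combination (W ^ (A i.castSucc) * W ^ α i * Z ^ (B i.succ) * Z ^ β i) * htwo'
  refine ⟨part1, ?_, ?_⟩
  · -- ker g = range d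
    apply le_antisymm
    · intro x hx
      rw [LinearMap.mem_ker] at hx
      set vN : ℕ → MvPolynomial (Fin 2) (ZMod 2) :=
        fun j => if h : j < n + 1 then x ⟨j, h⟩ else 0 with hvN
      have hvNa : ∀ j : Fin (n+1), vN (j : ℕ) = x j := fun j => by simp only [hvN, dif_pos j.isLt, Fin.eta]
      have hgx : g x = ∑ j : Fin (n+1), x j * (W ^ A j * Z ^ B j) := by
        have hxdec : x = ∑ j : Fin (n+1), x j •
            (Pi.single j 1 : Fin (n+1) → MvPolynomial (Fin 2) (ZMod 2)) := by
          ext k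
          simp [Finset.sum_apply, Pi.single_apply]
        conv_lhs => rw [hxdec]
        rw [map_sum]
        simp only [map_smul, hg, smul_eq_mul]
      have hsum0 : ∑ j ∈ Finset.range (n+1), vN j *
          (W ^ (∑ i ∈ Finset.range j, αN i) * Z ^ (∑ i ∈ Finset.Ico j n, βN i)) = 0 := by
        rw [← Fin.sum_univ_eq_sum_range (fun j => vN j *
          (W ^ (∑ i ∈ Finset.range j, αN i) * Z ^ (∑ i ∈ Finset.Ico j n, βN i))) (n+1)]
        rw [← hx, hgx]
        apply Finset.sum_congr rfl
        intro j _
        rw [hvNa j, ← hAeq j, ← hBeq j]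
      obtain ⟨c, hc⟩ := key' n αN βN vN hsum0
      set y : Fin n → MvPolynomial (Fin 2) (ZMod 2) := fun i => c (i : ℕ) with hy
      refine ⟨y, ?_⟩
      have hydec : y = ∑ i : Fin n, y i •
          (Pi.single i 1 : Fin n → MvPolynomial (Fin 2) (ZMod 2)) := by
        ext k
        simp [Finset.sum_apply, Pi.single_apply]
      have hdy : d y = ∑ i : Fin n, y i • (Pi.single i.castSucc (W ^ α i)
          + Pi.single i.succ (Z ^ β i)) := by
        conv_lhs => rw [hydec]
        rw [map_sum]
        simp only [map_smul, hd]
      rw [hdy]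
      funext j
      have hjn1 : (j : ℕ) < n + 1 := j.isLt
      rw [Finset.sum_apply]
      have hterm : ∀ i : Fin n, ((y i • (Pi.single i.castSucc (W ^ α i)
          + Pi.single i.succ (Z ^ β i)) : Fin (n+1) → MvPolynomial (Fin 2) (ZMod 2))) j
          = (if j = i.castSucc then y i * W ^ α i else 0)
            + (if j = i.succ then y i * Z ^ β i else 0) := by
        intro i
        simp [Pi.single_apply, mul_add, mul_ite, mul_zero]
      rw [Finset.sum_congr rfl (fun i _ => hterm i), Finset.sum_add_distrib]
      have hS1 : (∑ i : Fin n, if j = i.castSucc then y i * W ^ α i else 0)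
          = if h : (j : ℕ) < n then c (j : ℕ) * W ^ α ⟨(j : ℕ), h⟩ else 0 := by
        by_cases h : (j : ℕ) < n
        · rw [dif_pos h, Finset.sum_eq_single (⟨(j : ℕ), h⟩ : Fin n)]
          · have hj : j = (⟨(j : ℕ), h⟩ : Fin n).castSucc := Fin.ext rfl
            rw [if_pos hj]
          · intro i _ hne
            rw [if_neg]
            intro heq
            apply hne
            apply Fin.ext
            have := congrArg Fin.val heq
            simpa using this.symm
          · simp
        · rw [dif_neg h]
          apply Finset.sum_eq_zero
          intro i _
          rw [if_neg]
          intro heq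
          apply h
          have := congrArg Fin.val heq
          simp at this
          omega
      have hS2 : (∑ i : Fin n, if j = i.succ then y i * Z ^ β i else 0)
          = if h : 0 < (j : ℕ) then c ((j : ℕ) - 1) * Z ^ β ⟨(j : ℕ) - 1, by omega⟩ else 0 := by
        by_cases h : 0 < (j : ℕ)
        · rw [dif_pos h, Finset.sum_eq_single (⟨(j : ℕ) - 1, by omega⟩ : Fin n)]
          · have hj : j = (⟨(j : ℕ) - 1, by omega⟩ : Fin n).succ := by
              apply Fin.ext
              show (j : ℕ) = ((j : ℕ) - 1) + 1
              omega
            rw [if_pos hj]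
          · intro i _ hne
            rw [if_neg]
            intro heq
            apply hne
            apply Fin.ext
            show (i : ℕ) = (j : ℕ) - 1
            have := congrArg Fin.val heq
            simp [Fin.val_succ] at this
            omega
          · simp
        · rw [dif_neg h]
          apply Finset.sum_eq_zero
          intro i _
          rw [if_neg]
          intro heq
          apply h
          have := congrArg Fin.val heq
          simp [Fin.val_succ] at this
          omega
      rw [hS1, hS2]
      have hcj := hc (j : ℕ) (by omega)
      rw [hvNa j] at hcj
      rw [hcj]
      congr 1
      · by_cases h : (j : ℕ) < n
        · rw [dif_pos h, if_pos h, hαNa _ h]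
        · rw [dif_neg h, if_neg h]
      · by_cases h0 : 0 < (j : ℕ)
        · rw [dif_pos h0, if_pos h0, hβNa _ (by omega)]
        · rw [dif_neg h0, if_neg h0]
    · rintro _ ⟨y, rfl⟩
      rw [LinearMap.mem_ker, ← LinearMap.comp_apply, part1, LinearMap.zero_apply]
  · -- range g
    rw [LinearMap.range_eq_map, ← (Pi.basisFun (MvPolynomial (Fin 2) (ZMod 2))
      (Fin (n+1))).span_eq, Submodule.map_span, ← Set.range_comp]
    have : (g ∘ (Pi.basisFun (MvPolynomial (Fin 2) (ZMod 2)) (Fin (n+1))))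
        = fun j => W ^ A j * Z ^ B j := by
      funext j
      rw [Function.comp_apply, hb _ j, hg j]
    rw [this]
end

section
/- Vanishing of chain maps between staircase complexes. Let R = F2[W,Z], and let d : R^n → R^{n+1} and d' : R^m → R^{m+1} be the staircase differentials associated to staircase data (n, α, β) and (m, α', β') with all step values ≥ 1. (a) Any chain map between the staircase complexes that strictly increases the algebraic grading vanishes: if g : R^{n+1} → R^m is an R-linear map (the only possible component of such a chain map, from the algebraic grading 0 part of the source to the algebraic grading 1 part of the target) satisfying d' ∘ g = 0, then g = 0. (b) Any chain map preserving the algebraic grading that vanishes in algebraic grading 0 vanishes identically: if F₁ : R^n → R^m and F₀ : R^{n+1} → R^{m+1} are R-linear with d' ∘ F₁ = F₀ ∘ d and F₀ = 0, then F₁ = 0. -/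
/-!
The differential `d'` of a staircase complex is injective: in the coordinate `castSucc j` of
`d' x` only `x j` (with coefficient `W ^ α' j`) and `x (j - 1)` (with coefficient
`Z ^ β' (j - 1)`) appear, so `d' x = 0` forces `x j = 0` by induction on `j`, as powers of `W` are
non-zero-divisors. A chain map of either kind in the theorem has `d' ∘ g = 0` for its component
`g` into the target's grading 1 part, hence vanishes.
-/

local notation "R" => MvPolynomial (Fin 2) (ZMod 2)
local notation "W" => (MvPolynomial.X 0 : MvPolynomial (Fin 2) (ZMod 2))
local notation "Z" => (MvPolynomial.X 1 : MvPolynomial (Fin 2) (ZMod 2))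

section Bidiagonal

variable {A : Type*} [Ring A] {m : ℕ} {a b : Fin m → A}
  {d : (Fin m → A) →ₗ[A] (Fin (m + 1) → A)}

theorem bidiagonal_apply_castSucc
    (hd : ∀ i : Fin m, d (Pi.single i 1) =
      Pi.single i.castSucc (a i) + Pi.single i.succ (b i))
    (x : Fin m → A) (j : Fin m) (hx : ∀ i < j, x i = 0) :
    d x j.castSucc = x j * a j := by
  classical
  have hsum : d x = ∑ i, x i • d (Pi.single i 1) := by
    conv_lhs => rw [← Finset.univ_sum_single x]
    simp_rw [map_sum, ← map_smul, ← Pi.single_smul', smul_eq_mul, mul_one]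
  rw [hsum, Finset.sum_apply, Finset.sum_eq_single j]
  · simp [hd, Fin.ext_iff]
  · intro i _ hij
    rcases lt_or_gt_of_ne hij with hlt | hgt
    · simp [hx i hlt]
    · have hcast : i.castSucc ≠ j.castSucc := by simpa using hij
      have hsucc : i.succ ≠ j.castSucc := by
        rw [Ne, Fin.ext_iff]; simp only [Fin.val_succ, Fin.val_castSucc]; omega
      simp [hd, Pi.single_eq_of_ne' hcast, Pi.single_eq_of_ne' hsucc]
  · simp

theorem bidiagonal_injective
    (hd : ∀ i : Fin m, d (Pi.single i 1) =
      Pi.single i.castSucc (a i) + Pi.single i.succ (b i))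
    (ha : ∀ i, a i ∈ nonZeroDivisors A) :
    Function.Injective d := by
  refine (injective_iff_map_eq_zero d).mpr fun x hx => funext fun j => ?_
  induction j using WellFoundedLT.induction with
  | _ j ih =>
    have := bidiagonal_apply_castSucc hd x j ih
    rwa [hx, Pi.zero_apply, eq_comm, mul_right_mem_nonZeroDivisors_eq_zero_iff (ha j)] at this

end Bidiagonal

theorem staircase_chain_maps_vanish_general
    (n m : ℕ) (α' β' : Fin m → ℕ)
    (d : (Fin n → R) →ₗ[R] (Fin (n + 1) → R))
    (d' : (Fin m → R) →ₗ[R] (Fin (m + 1) → R))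
    (hd' : ∀ i : Fin m, d' (Pi.single i 1) =
      Pi.single i.castSucc (W ^ α' i) + Pi.single i.succ (Z ^ β' i)) :
    (∀ g : (Fin (n + 1) → R) →ₗ[R] (Fin m → R), d' ∘ₗ g = 0 → g = 0) ∧
    (∀ (F₁ : (Fin n → R) →ₗ[R] (Fin m → R))
       (F₀ : (Fin (n + 1) → R) →ₗ[R] (Fin (m + 1) → R)),
      d' ∘ₗ F₁ = F₀ ∘ₗ d → F₀ = 0 → F₁ = 0) := by
  have hW : ∀ i, W ^ α' i ∈ nonZeroDivisors R := fun i =>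
    pow_mem (mem_nonZeroDivisors_of_ne_zero (MvPolynomial.X_ne_zero 0)) _
  have cancel_d' {k : ℕ} (g : (Fin k → R) →ₗ[R] (Fin m → R)) (hg : d' ∘ₗ g = 0) : g = 0 :=
    (LinearMap.cancel_left (bidiagonal_injective hd' hW)).mp (hg.trans (LinearMap.comp_zero d').symm)
  refine ⟨fun g => cancel_d' g, fun F₁ F₀ hcomm hF₀ => cancel_d' F₁ ?_⟩
  rw [hcomm, hF₀, LinearMap.zero_comp]

/-- Vanishing of chain maps between staircase complexes:
(a) a chain map strictly increasing the algebraic grading vanishes;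
(b) a grading-preserving chain map vanishing in algebraic grading 0 vanishes. -/
theorem staircase_chain_maps_vanish
    (n m : ℕ) (α β : Fin n → ℕ) (α' β' : Fin m → ℕ)
    (hα : ∀ i, 1 ≤ α i) (hβ : ∀ i, 1 ≤ β i)
    (hα' : ∀ i, 1 ≤ α' i) (hβ' : ∀ i, 1 ≤ β' i)
    (d : (Fin n → R) →ₗ[R] (Fin (n + 1) → R))
    (hd : ∀ i : Fin n, d (Pi.single i 1) =
      Pi.single i.castSucc (W ^ α i) + Pi.single i.succ (Z ^ β i))
    (d' : (Fin m → R) →ₗ[R] (Fin (m + 1) → R))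
    (hd' : ∀ i : Fin m, d' (Pi.single i 1) =
      Pi.single i.castSucc (W ^ α' i) + Pi.single i.succ (Z ^ β' i)) :
    (∀ g : (Fin (n + 1) → R) →ₗ[R] (Fin m → R), d' ∘ₗ g = 0 → g = 0) ∧
    (∀ (F₁ : (Fin n → R) →ₗ[R] (Fin m → R))
       (F₀ : (Fin (n + 1) → R) →ₗ[R] (Fin (m + 1) → R)),
      d' ∘ₗ F₁ = F₀ ∘ₗ d → F₀ = 0 → F₁ = 0) :=
  staircase_chain_maps_vanish_general n m α' β' d d' hd'
end

section
/- Null-homotopy of degree (−1,−1) endomorphisms of a staircase complex. Let R = F2[W,Z] and let d : R^n → R^{n+1} be the staircase differential associated to staircase data α, β : Fin n → ℕ (all values ≥ 1), d(e_i) = W^{α i}·f_i + Z^{β i}·f_{i+1}. For arbitrary coefficients c, c' : Fin n → F2, define the R-linear map f : R^n → R^{n+1} by f(e_i) = c_i · W^{α i}·f_i + c'_i · Z^{β i}·f_{i+1}. Then f is a boundary in the endomorphism complex of the staircase: there exist R-linear maps J₁ : R^n → R^n and J₀ : R^{n+1} → R^{n+1} such that f = d ∘ J₁ + J₀ ∘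 d. (Combined with the grading classification of such cycles, this says that the morphism complex Hom(S,S) of a finite staircase complex S has trivial homology in algebraic grading −1 and Maslov bidegree (−1,−1); equivalently, the Maslov bidegree (−1,−1) part of Ext¹_R(H_*(S), H_*(S)) vanishes.) -/
local notation "R" => MvPolynomial (Fin 2) (ZMod 2)
local notation "W" => (MvPolynomial.X 0 : MvPolynomial (Fin 2) (ZMod 2))
local notation "Z" => (MvPolynomial.X 1 : MvPolynomial (Fin 2) (ZMod 2))

/-- Any Maslov degree `(-1,-1)`, algebraic degree `-1` cycle of the endomorphism complex of a
staircase complex is a boundary: every map of the displayed form equals `d ∘ J₁ + J₀ ∘ d`. -/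
theorem staircase_degree_neg_one_endomorphism_nullhomotopic
    (n : ℕ) (α β : Fin n → ℕ) (hα : ∀ i, 1 ≤ α i) (hβ : ∀ i, 1 ≤ β i)
    (d : (Fin n → R) →ₗ[R] (Fin (n + 1) → R))
    (hd : ∀ i : Fin n, d (Pi.single i 1) =
      Pi.single i.castSucc (W ^ α i) + Pi.single i.succ (Z ^ β i))
    (c c' : Fin n → ZMod 2)
    (f : (Fin n → R) →ₗ[R] (Fin (n + 1) → R))
    (hf : ∀ i : Fin n, f (Pi.single i 1) =
      Pi.single i.castSucc (MvPolynomial.C (c i) * W ^ α i) +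
      Pi.single i.succ (MvPolynomial.C (c' i) * Z ^ β i)) :
    ∃ (J₁ : (Fin n → R) →ₗ[R] (Fin n → R))
      (J₀ : (Fin (n + 1) → R) →ₗ[R] (Fin (n + 1) → R)),
      f = d ∘ₗ J₁ + J₀ ∘ₗ d := by
  classical
  -- recursively defined potentials
  let μ : ℕ → ZMod 2 := fun k =>
    Nat.rec 0 (fun k prev => (if h : k < n then c' ⟨k, h⟩ + c ⟨k, h⟩ else 0) + prev) k
  have hμsucc : ∀ k (h : k < n), μ (k + 1) = c' ⟨k, h⟩ + c ⟨k, h⟩ + μ k := by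
    intro k h
    simp only [μ, dif_pos h]
  let l : Fin n → ZMod 2 := fun i => c i + μ i.val
  -- diagonal homotopies
  refine ⟨LinearMap.pi fun i => (MvPolynomial.C (l i) : R) • (LinearMap.proj i : (Fin n → R) →ₗ[R] R),
    LinearMap.pi fun j => (MvPolynomial.C (μ j.val) : R) • (LinearMap.proj j : (Fin (n+1) → R) →ₗ[R] R), ?_⟩
  apply (Pi.basisFun R (Fin n)).ext
  intro i
  have hsingle : ∀ (m : ℕ) (a : Fin m → ZMod 2) (j : Fin m) (x : MvPolynomial (Fin 2) (ZMod 2)),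
      (LinearMap.pi fun k => (MvPolynomial.C (a k) : R) • (LinearMap.proj k : (Fin m → R) →ₗ[R] R))
        (Pi.single j x) = Pi.single j (MvPolynomial.C (a j) * x) := by
    intro m a j x
    funext k
    by_cases hk : k = j
    · subst hk
      simp [smul_eq_mul]
    · simp [Pi.single_eq_of_ne hk, smul_eq_mul]
  have hb : (Pi.basisFun R (Fin n)) i = Pi.single i (1 : R) := by
    simp [Pi.basisFun_apply]
  rw [hb]
  rw [hf i]
  simp only [LinearMap.add_apply, LinearMap.comp_apply]
  rw [hsingle n l i 1, mul_one]
  have h1 : Pi.single i (MvPolynomial.C (l i)) =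
      (MvPolynomial.C (l i) : R) • Pi.single (M := fun _ : Fin n => R) i (1 : R) := by
    funext k
    by_cases hk : k = i
    · subst hk; simp
    · simp [Pi.single_eq_of_ne hk]
  rw [h1, map_smul, hd i,
    map_add (LinearMap.pi fun j => (MvPolynomial.C (μ j.val) : R) •
      (LinearMap.proj j : (Fin (n+1) → R) →ₗ[R] R)), hsingle (n+1) (fun j => μ j.val) i.castSucc,
    hsingle (n+1) (fun j => μ j.val) i.succ]
  have hcast : (i.castSucc : Fin (n+1)).val = i.val := rfl
  have hsuc : (i.succ : Fin (n+1)).val = i.val + 1 := rfl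
  rw [smul_add]
  have e1 : (MvPolynomial.C (l i) : R) • Pi.single (M := fun _ : Fin (n+1) => R)
      i.castSucc (W ^ α i) = Pi.single i.castSucc (MvPolynomial.C (l i) * W ^ α i) := by
    funext k
    by_cases hk : k = i.castSucc
    · subst hk; simp [smul_eq_mul]
    · simp [Pi.single_eq_of_ne hk, smul_eq_mul]
  have e2 : (MvPolynomial.C (l i) : R) • Pi.single (M := fun _ : Fin (n+1) => R)
      i.succ (Z ^ β i) = Pi.single i.succ (MvPolynomial.C (l i) * Z ^ β i) := by
    funext k
    by_cases hk : k = i.succ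
    · subst hk; simp [smul_eq_mul]
    · simp [Pi.single_eq_of_ne hk, smul_eq_mul]
  rw [e1, e2]
  have h2 : ∀ x y : ZMod 2, x + y + y = x := by decide
  have key1 : MvPolynomial.C (l i) * W ^ α i +
      MvPolynomial.C (μ (i.castSucc : Fin (n+1)).val) * W ^ α i
      = MvPolynomial.C (c i) * W ^ α i := by
    rw [hcast, ← add_mul, ← map_add]
    exact congrArg (fun t => MvPolynomial.C t * W ^ α i) (h2 (c i) (μ i.val))
  have key2 : MvPolynomial.C (l i) * Z ^ β i +
      MvPolynomial.C (μ (i.succ : Fin (n+1)).val) * Z ^ β i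
      = MvPolynomial.C (c' i) * Z ^ β i := by
    rw [hsuc, hμsucc i.val i.isLt, ← add_mul, ← map_add]
    refine congrArg (fun t => MvPolynomial.C t * Z ^ β i) ?_
    have hi : (⟨i.val, i.isLt⟩ : Fin n) = i := rfl
    rw [hi]
    have := h2 (c' i) (c i + μ i.val)
    simp only [l]
    linear_combination this
  calc Pi.single i.castSucc (MvPolynomial.C (c i) * W ^ α i) +
        Pi.single i.succ (MvPolynomial.C (c' i) * Z ^ β i)
      = Pi.single (M := fun _ : Fin (n+1) => R) i.castSucc (MvPolynomial.C (l i) * W ^ α i +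
          MvPolynomial.C (μ (i.castSucc : Fin (n+1)).val) * W ^ α i) +
        Pi.single (M := fun _ : Fin (n+1) => R) i.succ (MvPolynomial.C (l i) * Z ^ β i +
          MvPolynomial.C (μ (i.succ : Fin (n+1)).val) * Z ^ β i) := by rw [key1, key2]
    _ = _ := by
      rw [Pi.single_add, Pi.single_add]
      abel
end

section
/- Staircase monomial ideals determine their staircase data. Let R = F2[W,Z]. For staircase data (n, α, β) with all steps ≥ 1, let I(n, α, β) ⊆ R denote the ideal generated by the monomials W^{A_j} Z^{B_j} for j = 0, …, n, where A_j = Σ_{k<j} α k and B_j = Σ_{k≥j} β k. If I(n, α, β) and I(m, α', β') are isomorphic as R-modules, then n = m, α = α' and β = β'; in particular the two ideals are equal. Hence the homology of a staircase complex determines the staircase data uniquely. -/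
open MvPolynomial

/-- Abbreviation for the ambient ring `F₂[W,Z]`. -/
abbrev Rpoly := MvPolynomial (Fin 2) (ZMod 2)

/-- The staircase monomial ideal of staircase data `(n, α, β)`: the ideal of `F₂[W,Z]`
generated by the monomials `W^{A_j} Z^{B_j}`, `j = 0, …, n`, where
`A_j = ∑_{k<j} α k` and `B_j = ∑_{k≥j} β k`. -/
noncomputable def stairIdeal (n : ℕ) (α β : Fin n → ℕ) :
    Ideal (MvPolynomial (Fin 2) (ZMod 2)) :=
  Ideal.span (Set.range fun j : Fin (n + 1) =>
    (MvPolynomial.X 0 : MvPolynomial (Fin 2) (ZMod 2)) ^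
        (∑ k ∈ Finset.univ.filter (fun k : Fin n => (k : ℕ) < (j : ℕ)), α k) *
      (MvPolynomial.X 1 : MvPolynomial (Fin 2) (ZMod 2)) ^
        (∑ k ∈ Finset.univ.filter (fun k : Fin n => (j : ℕ) ≤ (k : ℕ)), β k))



/-! ### Primality and coprimality facts in `F₂[W,Z]` -/

lemma stair_primeX (i : Fin 2) : Prime (X i : Rpoly) := by
  have h0 : Prime (X 0 : Rpoly) := by
    rw [← MulEquiv.prime_iff (MvPolynomial.finSuccEquiv (ZMod 2) 1).toMulEquiv]
    have : (MvPolynomial.finSuccEquiv (ZMod 2) 1).toMulEquiv (X 0 : Rpoly) = Polynomial.X := by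
      simpa using MvPolynomial.finSuccEquiv_X_zero (R := ZMod 2) (n := 1)
    rw [this]
    exact Polynomial.prime_X
  fin_cases i
  · exact h0
  · have h := (MulEquiv.prime_iff (MvPolynomial.renameEquiv (ZMod 2) (Equiv.swap (0 : Fin 2) 1)).toMulEquiv
      (p := (X 0 : Rpoly))).mpr h0
    simpa using h

lemma stair_X_not_assoc : ¬ Associated (X 0 : Rpoly) (X 1 : Rpoly) := by
  rintro ⟨u, hu⟩
  have := congrArg (MvPolynomial.eval (fun j : Fin 2 => if j = 0 then (0 : ZMod 2) else 1)) hu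
  simp at this

lemma stair_dvd_of_dvd_mul_pows {d c : Rpoly} {a b : ℕ}
    (h1 : d ∣ c * X 0 ^ a) (h2 : d ∣ c * X 1 ^ b) : d ∣ c := by
  classical
  letI := UniqueFactorizationMonoid.toGCDMonoid Rpoly
  have hd : d ∣ gcd (c * X 0 ^ a) (c * X 1 ^ b) := dvd_gcd h1 h2
  have hassoc := gcd_mul_left' c ((X 0 : Rpoly) ^ a) ((X 1 : Rpoly) ^ b)
  have hunit : IsUnit (gcd ((X 0 : Rpoly) ^ a) ((X 1 : Rpoly) ^ b)) := by
    by_contra hu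
    have hne : gcd ((X 0 : Rpoly) ^ a) ((X 1 : Rpoly) ^ b) ≠ 0 := by
      intro h0
      have h := gcd_dvd_left ((X 0 : Rpoly) ^ a) ((X 1 : Rpoly) ^ b)
      rw [h0, zero_dvd_iff] at h
      exact pow_ne_zero a (MvPolynomial.X_ne_zero 0) h
    obtain ⟨p, hp, hpd⟩ := WfDvdMonoid.exists_irreducible_factor hu hne
    have hd0 : p ∣ (X 0 : Rpoly) := (UniqueFactorizationMonoid.irreducible_iff_prime.mp
      hp).dvd_of_dvd_pow (hpd.trans (gcd_dvd_left _ _))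
    have hd1 : p ∣ (X 1 : Rpoly) := (UniqueFactorizationMonoid.irreducible_iff_prime.mp
      hp).dvd_of_dvd_pow (hpd.trans (gcd_dvd_right _ _))
    exact stair_X_not_assoc
      (((hp.associated_of_dvd (stair_primeX 0).irreducible hd0).symm).trans
        (hp.associated_of_dvd (stair_primeX 1).irreducible hd1))
  have hc : Associated (gcd (c * X 0 ^ a) (c * X 1 ^ b)) c :=
    hassoc.trans (associated_mul_unit_left c _ hunit)
  exact hd.trans hc.dvd

/-! ### The staircase arithmetic functions -/

def stairA (n : ℕ) (α : Fin n → ℕ) (j : ℕ) : ℕ :=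
  ∑ k ∈ Finset.univ.filter (fun k : Fin n => (k : ℕ) < j), α k

def stairB (n : ℕ) (β : Fin n → ℕ) (j : ℕ) : ℕ :=
  ∑ k ∈ Finset.univ.filter (fun k : Fin n => j ≤ (k : ℕ)), β k

lemma stairIdeal_eq (n : ℕ) (α β : Fin n → ℕ) :
    stairIdeal n α β = Ideal.span (Set.range fun j : Fin (n + 1) =>
      (X 0 : Rpoly) ^ stairA n α j * (X 1 : Rpoly) ^ stairB n β j) := rfl

lemma stairA_mono {n : ℕ} {α : Fin n → ℕ} : Monotone (stairA n α) := by
  intro x y hxy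
  apply Finset.sum_le_sum_of_subset
  intro k hk
  simp only [Finset.mem_filter, Finset.mem_univ, true_and] at hk ⊢
  omega

lemma stairB_anti {n : ℕ} {β : Fin n → ℕ} : Antitone (stairB n β) := by
  intro x y hxy
  apply Finset.sum_le_sum_of_subset
  intro k hk
  simp only [Finset.mem_filter, Finset.mem_univ, true_and] at hk ⊢
  omega

lemma stairA_succ {n : ℕ} (α : Fin n → ℕ) (i : Fin n) :
    stairA n α ((i : ℕ) + 1) = stairA n α i + α i := by
  unfold stairA
  have h : (Finset.univ.filter (fun k : Fin n => (k : ℕ) < (i : ℕ) + 1))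
      = insert i (Finset.univ.filter (fun k : Fin n => (k : ℕ) < (i : ℕ))) := by
    ext k
    simp only [Finset.mem_filter, Finset.mem_univ, true_and, Finset.mem_insert]
    constructor
    · intro hk
      rcases Nat.lt_succ_iff_lt_or_eq.mp hk with h' | h'
      · exact Or.inr h'
      · exact Or.inl (Fin.ext h')
    · rintro (rfl | hk) <;> omega
  rw [h, Finset.sum_insert (by simp)]
  ring

lemma stairB_succ {n : ℕ} (β : Fin n → ℕ) (i : Fin n) :
    stairB n β (i : ℕ) = β i + stairB n β ((i : ℕ) + 1) := by
  unfold stairB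
  have h : (Finset.univ.filter (fun k : Fin n => (i : ℕ) ≤ (k : ℕ)))
      = insert i (Finset.univ.filter (fun k : Fin n => (i : ℕ) + 1 ≤ (k : ℕ))) := by
    ext k
    simp only [Finset.mem_filter, Finset.mem_univ, true_and, Finset.mem_insert]
    constructor
    · intro hk
      rcases eq_or_lt_of_le hk with h' | h'
      · exact Or.inl (Fin.ext h'.symm)
      · exact Or.inr h'
    · rintro (rfl | hk) <;> omega
  rw [h, Finset.sum_insert (by simp)]

lemma stairA_strict {n : ℕ} {α : Fin n → ℕ} (hα : ∀ i, 1 ≤ α i) {a b : ℕ}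
    (hab : a < b) (hb : b ≤ n) : stairA n α a < stairA n α b := by
  have ha : a < n := lt_of_lt_of_le hab hb
  calc stairA n α a < stairA n α (a + 1) := by
        have h0 := stairA_succ α ⟨a, ha⟩
        have h1 := hα ⟨a, ha⟩
        simp only [Fin.val_mk] at h0
        omega
    _ ≤ stairA n α b := stairA_mono (by omega)

lemma stairB_strict {n : ℕ} {β : Fin n → ℕ} (hβ : ∀ i, 1 ≤ β i) {a b : ℕ}
    (hab : a < b) (hb : b ≤ n) : stairB n β b < stairB n β a := by
  have ha : a < n := lt_of_lt_of_le hab hb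
  calc stairB n β b ≤ stairB n β (a + 1) := stairB_anti (by omega)
    _ < stairB n β a := by
        have h0 := stairB_succ β ⟨a, ha⟩
        have h1 := hβ ⟨a, ha⟩
        simp only [Fin.val_mk] at h0
        omega

/-! ### Monomial membership in staircase ideals -/

lemma stair_gen_eq (a b : ℕ) :
    (X 0 : Rpoly) ^ a * (X 1 : Rpoly) ^ b
      = monomial (Finsupp.single 0 a + Finsupp.single 1 b) (1 : ZMod 2) := by
  rw [X_pow_eq_monomial, X_pow_eq_monomial, monomial_mul, one_mul]

lemma stair_single_le_iff {A B p q : ℕ} :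
    (Finsupp.single (0 : Fin 2) A + Finsupp.single 1 B)
      ≤ (Finsupp.single (0 : Fin 2) p + Finsupp.single 1 q) ↔ A ≤ p ∧ B ≤ q := by
  simp [Finsupp.le_def, Fin.forall_fin_two, Finsupp.single_apply]

lemma mem_stair_iff {n : ℕ} {α β : Fin n → ℕ} {p q : ℕ} :
    monomial (Finsupp.single (0 : Fin 2) p + Finsupp.single 1 q) (1 : ZMod 2)
        ∈ stairIdeal n α β
      ↔ ∃ j : Fin (n + 1), stairA n α j ≤ p ∧ stairB n β j ≤ q := by
  constructor
  · intro hmem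
    rw [stairIdeal_eq, Ideal.mem_span_range_iff_exists_fun] at hmem
    obtain ⟨c, hc⟩ := hmem
    by_contra h
    push_neg at h
    have h0 : ∀ j : Fin (n + 1),
        MvPolynomial.coeff (Finsupp.single (0 : Fin 2) p + Finsupp.single 1 q)
          (c j * ((X 0 : Rpoly) ^ stairA n α j * (X 1 : Rpoly) ^ stairB n β j)) = 0 := by
      intro j
      rw [stair_gen_eq, coeff_mul_monomial', if_neg]
      intro hle
      obtain ⟨hA, hB⟩ := stair_single_le_iff.mp hle
      exact absurd hB (not_le.mpr (h j hA))
    have hco := congrArg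
      (MvPolynomial.coeff (Finsupp.single (0 : Fin 2) p + Finsupp.single 1 q)) hc
    rw [MvPolynomial.coeff_sum] at hco
    simp only [h0, Finset.sum_const_zero, MvPolynomial.coeff_monomial, if_pos rfl] at hco
    exact one_ne_zero hco.symm
  · rintro ⟨j, hA, hB⟩
    have hg : (X 0 : Rpoly) ^ stairA n α j * (X 1 : Rpoly) ^ stairB n β j ∈ stairIdeal n α β := by
      rw [stairIdeal_eq]
      exact Ideal.subset_span ⟨j, rfl⟩
    have hmul := Ideal.mul_mem_right
      (monomial (Finsupp.single (0 : Fin 2) (p - stairA n α j)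
        + Finsupp.single 1 (q - stairB n β j)) (1 : ZMod 2)) _ hg
    rw [stair_gen_eq, monomial_mul, one_mul] at hmul
    convert hmul using 2
    rw [add_add_add_comm, ← Finsupp.single_add, ← Finsupp.single_add,
      Nat.add_sub_cancel' hA, Nat.add_sub_cancel' hB]

/-! ### Equal staircase ideals have equal data -/

lemma stair_corner {n m : ℕ} {α β : Fin n → ℕ} {α' β' : Fin m → ℕ}
    (hα : ∀ i, 1 ≤ α i) (hβ : ∀ i, 1 ≤ β i)
    (h : stairIdeal n α β = stairIdeal m α' β') (j : Fin (n + 1)) :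
    ∃ k : Fin (m + 1), stairA m α' k = stairA n α j ∧ stairB m β' k = stairB n β j := by
  have key : ∀ jj : Fin (n + 1), ∃ k : Fin (m + 1),
      stairA m α' k ≤ stairA n α jj ∧ stairB m β' k ≤ stairB n β jj := by
    intro jj
    have hg := (mem_stair_iff (α := α) (β := β)).mpr ⟨jj, le_refl _, le_refl _⟩
    rw [h] at hg
    exact mem_stair_iff.mp hg
  have key' : ∀ k : Fin (m + 1), ∃ jj : Fin (n + 1),
      stairA n α jj ≤ stairA m α' k ∧ stairB n β jj ≤ stairB m β' k := by
    intro k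
    have hg := (mem_stair_iff (α := α') (β := β')).mpr ⟨k, le_refl _, le_refl _⟩
    rw [← h] at hg
    exact mem_stair_iff.mp hg
  obtain ⟨k, hk1, hk2⟩ := key j
  obtain ⟨j', hj1, hj2⟩ := key' k
  have hA : stairA n α j' ≤ stairA n α j := le_trans hj1 hk1
  have hB : stairB n β j' ≤ stairB n β j := le_trans hj2 hk2
  have h1 : (j' : ℕ) ≤ (j : ℕ) := by
    by_contra hc
    exact absurd hA (not_le.mpr (stairA_strict hα (by omega) j'.is_le))
  have h2 : (j : ℕ) ≤ (j' : ℕ) := by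
    by_contra hc
    exact absurd hB (not_le.mpr (stairB_strict hβ (by omega) j.is_le))
  have hjj : (j' : ℕ) = (j : ℕ) := le_antisymm h1 h2
  rw [hjj] at hj1 hj2
  exact ⟨k, le_antisymm hk1 hj1, le_antisymm hk2 hj2⟩

lemma stair_data_eq {n m : ℕ} {α β : Fin n → ℕ} {α' β' : Fin m → ℕ}
    (hα : ∀ i, 1 ≤ α i) (hβ : ∀ i, 1 ≤ β i) (hα' : ∀ i, 1 ≤ α' i) (hβ' : ∀ i, 1 ≤ β' i)
    (h : stairIdeal n α β = stairIdeal m α' β') :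
    ∃ hnm : n = m, ∀ i : Fin n,
      α i = α' (Fin.cast hnm i) ∧ β i = β' (Fin.cast hnm i) := by
  choose F hF1 hF2 using stair_corner hα hβ h
  choose G hG1 hG2 using stair_corner hα' hβ' h.symm
  have hAinj : ∀ x y : Fin (n + 1), stairA n α x = stairA n α y → x = y := by
    intro x y hxy
    rcases lt_trichotomy (x : ℕ) (y : ℕ) with hc | hc | hc
    · exact absurd hxy (ne_of_lt (stairA_strict hα hc y.is_le))
    · exact Fin.ext hc
    · exact absurd hxy.symm (ne_of_lt (stairA_strict hα hc x.is_le))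
  have hA'inj : ∀ x y : Fin (m + 1), stairA m α' x = stairA m α' y → x = y := by
    intro x y hxy
    rcases lt_trichotomy (x : ℕ) (y : ℕ) with hc | hc | hc
    · exact absurd hxy (ne_of_lt (stairA_strict hα' hc y.is_le))
    · exact Fin.ext hc
    · exact absurd hxy.symm (ne_of_lt (stairA_strict hα' hc x.is_le))
  have hFinj : Function.Injective F := fun x y hxy =>
    hAinj x y (by rw [← hF1 x, ← hF1 y, hxy])
  have hGinj : Function.Injective G := fun x y hxy =>
    hA'inj x y (by rw [← hG1 x, ← hG1 y, hxy])
  have hnm : n = m := by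
    have h1 := Fintype.card_le_of_injective F hFinj
    have h2 := Fintype.card_le_of_injective G hGinj
    simp only [Fintype.card_fin] at h1 h2
    omega
  subst hnm
  have hGF : ∀ j, G (F j) = j := fun j => hAinj _ _ (by rw [hG1, hF1])
  have hFmono : StrictMono F := by
    intro x y hxy
    have hlt : stairA n α' (F x) < stairA n α' (F y) := by
      rw [hF1, hF1]
      exact stairA_strict hα hxy y.is_le
    by_contra hc
    push_neg at hc
    exact absurd hlt (not_lt.mpr (stairA_mono hc))
  have hGmono : StrictMono G := by
    intro x y hxy
    have hlt : stairA n α (G x) < stairA n α (G y) := by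
      rw [hG1, hG1]
      exact stairA_strict hα' hxy y.is_le
    by_contra hc
    push_neg at hc
    exact absurd hlt (not_lt.mpr (stairA_mono hc))
  have hwf : WellFoundedLT (Fin (n + 1)) := inferInstance
  have hFid : ∀ j, F j = j := by
    intro j
    have h1 : G j ≤ j := by
      have hgj := hGmono.monotone (@StrictMono.le_apply _ _ hwf F hFmono j)
      rwa [hGF j] at hgj
    have hGid : G j = j := le_antisymm h1 (@StrictMono.le_apply _ _ hwf G hGmono j)
    exact hGinj (by rw [hGF j, hGid])
  have hAeq : ∀ j : Fin (n + 1), stairA n α' (j : ℕ) = stairA n α (j : ℕ) := by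
    intro j
    have := hF1 j
    rwa [hFid j] at this
  have hBeq : ∀ j : Fin (n + 1), stairB n β' (j : ℕ) = stairB n β (j : ℕ) := by
    intro j
    have := hF2 j
    rwa [hFid j] at this
  refine ⟨rfl, fun i => ?_⟩
  have hcast : Fin.cast rfl i = i := rfl
  rw [hcast]
  constructor
  · have h1 := stairA_succ α i
    have h2 := stairA_succ α' i
    have e1 := hAeq i.castSucc
    have e2 := hAeq i.succ
    simp only [Fin.coe_castSucc, Fin.val_succ] at e1 e2
    omega
  · have h1 := stairB_succ β i
    have h2 := stairB_succ β' i
    have e1 := hBeq i.castSucc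
    have e2 := hBeq i.succ
    simp only [Fin.coe_castSucc, Fin.val_succ] at e1 e2
    omega

/-! ### Isomorphic staircase ideals are equal -/

lemma stair_X0_pow_mem (n : ℕ) (α β : Fin n → ℕ) :
    (X 0 : Rpoly) ^ stairA n α n ∈ stairIdeal n α β := by
  have h := Ideal.subset_span (Set.mem_range_self (f := fun j : Fin (n + 1) =>
    (X 0 : Rpoly) ^ stairA n α j * (X 1 : Rpoly) ^ stairB n β j) (Fin.last n))
  rw [← stairIdeal_eq] at h
  have hB : stairB n β ((Fin.last n : Fin (n + 1)) : ℕ) = 0 := by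
    unfold stairB
    rw [Finset.sum_eq_zero_iff]
    intro k hk
    simp only [Finset.mem_filter, Finset.mem_univ, true_and, Fin.val_last] at hk
    omega
  rw [hB, pow_zero, mul_one, Fin.val_last] at h
  exact h

lemma stair_X1_pow_mem (n : ℕ) (α β : Fin n → ℕ) :
    (X 1 : Rpoly) ^ stairB n β 0 ∈ stairIdeal n α β := by
  have h := Ideal.subset_span (Set.mem_range_self (f := fun j : Fin (n + 1) =>
    (X 0 : Rpoly) ^ stairA n α j * (X 1 : Rpoly) ^ stairB n β j) (0 : Fin (n + 1)))
  rw [← stairIdeal_eq] at h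
  have hA : stairA n α ((0 : Fin (n + 1)) : ℕ) = 0 := by
    unfold stairA
    rw [Finset.sum_eq_zero_iff]
    intro k hk
    simp only [Finset.mem_filter, Finset.mem_univ, true_and, Fin.val_zero] at hk
    simp at hk
  rw [hA, pow_zero, one_mul, Fin.val_zero] at h
  exact h

lemma stair_cancel_le {c : Rpoly} (hc : c ≠ 0) {I J : Ideal Rpoly}
    (h : Ideal.span {c} * I ≤ Ideal.span {c} * J) : I ≤ J := by
  intro x hx
  have hm : c * x ∈ Ideal.span {c} * J :=
    h (Ideal.mul_mem_mul (Ideal.mem_span_singleton_self c) hx)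
  obtain ⟨z, hz, hcz⟩ := Ideal.mem_span_singleton_mul.mp hm
  rwa [← mul_left_cancel₀ hc hcz]

lemma stair_ideal_eq_of_iso {n m : ℕ} {α β : Fin n → ℕ} {α' β' : Fin m → ℕ}
    (φ : (stairIdeal n α β) ≃ₗ[Rpoly] (stairIdeal m α' β')) :
    stairIdeal n α β = stairIdeal m α' β' := by
  classical
  set I := stairIdeal n α β with hI
  set J := stairIdeal m α' β' with hJ
  set x₀ : I := ⟨(X 0 : Rpoly) ^ stairA n α n, stair_X0_pow_mem n α β⟩ with hx₀def
  set c : Rpoly := (φ x₀ : Rpoly) with hcdef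
  have hx₀ne : (x₀ : Rpoly) ≠ 0 := pow_ne_zero _ (MvPolynomial.X_ne_zero 0)
  -- fundamental relation
  have key : ∀ y : I, (x₀ : Rpoly) * (φ y : Rpoly) = (y : Rpoly) * c := by
    intro y
    have h1 : φ ((y : Rpoly) • x₀) = (y : Rpoly) • φ x₀ := φ.map_smul _ _
    have h2 : φ ((x₀ : Rpoly) • y) = (x₀ : Rpoly) • φ y := φ.map_smul _ _
    have h3 : (y : Rpoly) • x₀ = (x₀ : Rpoly) • y := Subtype.ext (mul_comm _ _)
    have := h2.symm.trans ((congrArg φ h3).symm.trans h1)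
    have hco := congrArg (fun z : J => (z : Rpoly)) this
    simpa [smul_eq_mul] using hco
  have hcne : c ≠ 0 := by
    intro h0
    have : φ x₀ = 0 := Subtype.ext h0
    have := φ.injective (this.trans (map_zero φ).symm)
    exact hx₀ne (congrArg Subtype.val this)
  -- x₀ ∣ c
  have hx₀c : (x₀ : Rpoly) ∣ c := by
    apply stair_dvd_of_dvd_mul_pows (a := stairA n α n) (b := stairB n β 0)
    · exact ⟨c, mul_comm c _⟩
    · have hy := key ⟨(X 1 : Rpoly) ^ stairB n β 0, stair_X1_pow_mem n α β⟩
      refine ⟨(φ ⟨(X 1 : Rpoly) ^ stairB n β 0, stair_X1_pow_mem n α β⟩ : Rpoly), ?_⟩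
      rw [mul_comm]
      exact hy.symm
  -- c ∣ x₀
  have hkey' : ∀ z : J, c * (φ.symm z : Rpoly) = (z : Rpoly) * (x₀ : Rpoly) := by
    intro z
    have := key (φ.symm z)
    rw [φ.apply_symm_apply] at this
    linear_combination -this
  have hcx₀ : c ∣ (x₀ : Rpoly) := by
    apply stair_dvd_of_dvd_mul_pows (a := stairA m α' m) (b := stairB m β' 0)
    · have hz := hkey' ⟨(X 0 : Rpoly) ^ stairA m α' m, stair_X0_pow_mem m α' β'⟩
      refine ⟨(φ.symm ⟨(X 0 : Rpoly) ^ stairA m α' m, stair_X0_pow_mem m α' β'⟩ : Rpoly), ?_⟩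
      rw [hz]
      exact mul_comm _ _
    · have hz := hkey' ⟨(X 1 : Rpoly) ^ stairB m β' 0, stair_X1_pow_mem m α' β'⟩
      refine ⟨(φ.symm ⟨(X 1 : Rpoly) ^ stairB m β' 0, stair_X1_pow_mem m α' β'⟩ : Rpoly), ?_⟩
      rw [hz]
      exact mul_comm _ _
  have hspan : Ideal.span {(x₀ : Rpoly)} = Ideal.span {c} :=
    Ideal.span_singleton_eq_span_singleton.mpr (associated_of_dvd_dvd hx₀c hcx₀)
  -- span{x₀} * J = span{c} * I
  have hmul : Ideal.span {(x₀ : Rpoly)} * J = Ideal.span {c} * I := by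
    apply le_antisymm
    · rw [Ideal.span_singleton_mul_le_iff]
      intro z hz
      have hzw := hkey' ⟨z, hz⟩
      rw [Ideal.mem_span_singleton_mul]
      exact ⟨(φ.symm ⟨z, hz⟩ : Rpoly), (φ.symm ⟨z, hz⟩).2, by rw [hzw, mul_comm]⟩
    · rw [Ideal.span_singleton_mul_le_iff]
      intro y hy
      have hyw := key ⟨y, hy⟩
      rw [Ideal.mem_span_singleton_mul]
      exact ⟨(φ ⟨y, hy⟩ : Rpoly), (φ ⟨y, hy⟩).2, by rw [hyw, mul_comm]⟩
  rw [hspan] at hmul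
  exact le_antisymm (stair_cancel_le hcne (le_of_eq hmul.symm)) (stair_cancel_le hcne (le_of_eq hmul))

/-- Staircase monomial ideals that are isomorphic as `F₂[W,Z]`-modules have identical
staircase data; in particular the two ideals are equal. -/
theorem staircase_ideal_determines_data
    (n m : ℕ) (α β : Fin n → ℕ) (α' β' : Fin m → ℕ)
    (hα : ∀ i, 1 ≤ α i) (hβ : ∀ i, 1 ≤ β i)
    (hα' : ∀ i, 1 ≤ α' i) (hβ' : ∀ i, 1 ≤ β' i)
    (hiso : Nonempty
      (↥(stairIdeal n α β) ≃ₗ[MvPolynomial (Fin 2) (ZMod 2)] ↥(stairIdeal m α' β'))) :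
    (∃ hnm : n = m, ∀ i : Fin n,
      α i = α' (Fin.cast hnm i) ∧ β i = β' (Fin.cast hnm i)) ∧
    stairIdeal n α β = stairIdeal m α' β' := by
  obtain ⟨φ⟩ := hiso
  have hIJ : stairIdeal n α β = stairIdeal m α' β' := stair_ideal_eq_of_iso φ
  exact ⟨stair_data_eq hα hβ hα' hβ' hIJ, hIJ⟩
end

section
/- A nonvanishing Ext² obstruction for the link Floer complex of the torus link T(2,4). Let R₂ = F2[W₁, Z₁, W₂, Z₂] be the polynomial ring in four commuting variables over F2. Consider the three-term complex of finite free R₂-modules C₂ →^{d₂} C₁ →^{d₁} C₀, where C₂ = R₂ with basis {e}, C₁ = R₂⁴ with basis {a, b, c, d}, C₀ = R₂³ with basis {x, y, z}, and the differentials are d₁(a) = W₂·x + Z₁·y, d₁(b) = W₁·x + Z₂·y, d₁(c) = W₂·y + Z₁·z, d₁(d) = W₁·y + Z₂·z, and d₂(e) = W₁·a + W₂·b + Z₂·c + Z₁·d. Then d₁ ∘ d₂ = 0, and the R₂-linear map φ : C₂ → C₀ defined by φ(e) = y (a chain map of homological degree −2) is not null-homotopic: there exist no R₂-linear maps h₂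 : C₂ → C₁ and h₁ : C₁ → C₀ with φ = d₁ ∘ h₂ + h₁ ∘ d₂. -/
/-!
The complex is minimal: every matrix entry of `d₁` and `d₂` lies in the augmentation ideal
`𝔪 = (W₁, Z₁, W₂, Z₂)`, so any map of the form `d₁ ∘ h₂ + h₁ ∘ d₂` lands in `𝔪 • C₀`. The map `φ`
does not, since the `y`-coordinate of `φ(e) = y` has constant term `1`.
-/

local notation "R₂" => MvPolynomial (Fin 4) (ZMod 2)
local notation "W₁" => (MvPolynomial.X 0 : MvPolynomial (Fin 4) (ZMod 2))
local notation "Z₁" => (MvPolynomial.X 1 : MvPolynomial (Fin 4) (ZMod 2))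
local notation "W₂" => (MvPolynomial.X 2 : MvPolynomial (Fin 4) (ZMod 2))
local notation "Z₂" => (MvPolynomial.X 3 : MvPolynomial (Fin 4) (ZMod 2))

section

variable {R : Type*} [CommRing R] {ι : Type*} {I : Ideal R}

theorem LinearMap.map_pi_single {M : Type*} [AddCommGroup M] [Module R M] [DecidableEq ι]
    (f : (ι → R) →ₗ[R] M) (i : ι) (r : R) : f (Pi.single i r) = r • f (Pi.single i 1) := by
  rw [← map_smul, ← Pi.single_smul', smul_eq_mul, mul_one]

theorem LinearMap.apply_mem_of_forall_pi_single_mem {M : Type*} [AddCommGroup M] [Module R M]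
    [Fintype ι] [DecidableEq ι] {p : Submodule R M} (f : (ι → R) →ₗ[R] M)
    (h : ∀ i, f (Pi.single i 1) ∈ p) (v : ι → R) : f v ∈ p := by
  rw [← Finset.univ_sum_single v, map_sum]
  exact Submodule.sum_mem p fun i _ => f.map_pi_single i (v i) ▸ p.smul_mem (v i) (h i)

theorem mem_ideal_smul_top_iff [Finite ι] {v : ι → R} :
    v ∈ I • (⊤ : Submodule R (ι → R)) ↔ ∀ j, v j ∈ I := by
  refine ⟨fun hv j => ?_, fun hv => ?_⟩
  · have := Submodule.smul_top_le_comap_smul_top I (LinearMap.proj j) hv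
    rwa [Submodule.mem_comap, smul_eq_mul, Ideal.mul_top] at this
  · classical
    have := Fintype.ofFinite ι
    rw [← Finset.univ_sum_single v]
    refine Submodule.sum_mem _ fun j _ => ?_
    rw [← mul_one (v j), ← smul_eq_mul, Pi.single_smul']
    exact Submodule.smul_mem_smul (hv j) Submodule.mem_top

end

/-- A nonvanishing `Ext²` obstruction for the link Floer complex of the torus link `T(2,4)`:
`d₁ ∘ d₂ = 0`, and the degree `−2` chain map `φ` with `φ(e) = y` is not null-homotopic. -/
theorem torus_link_T24_ext_two_obstruction
    (d₁ : (Fin 4 → R₂) →ₗ[R₂] (Fin 3 → R₂))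
    (d₂ : R₂ →ₗ[R₂] (Fin 4 → R₂))
    (φ : R₂ →ₗ[R₂] (Fin 3 → R₂))
    (hd₁a : d₁ (Pi.single (0 : Fin 4) 1) = Pi.single (0 : Fin 3) W₂ + Pi.single (1 : Fin 3) Z₁)
    (hd₁b : d₁ (Pi.single (1 : Fin 4) 1) = Pi.single (0 : Fin 3) W₁ + Pi.single (1 : Fin 3) Z₂)
    (hd₁c : d₁ (Pi.single (2 : Fin 4) 1) = Pi.single (1 : Fin 3) W₂ + Pi.single (2 : Fin 3) Z₁)
    (hd₁d : d₁ (Pi.single (3 : Fin 4) 1) = Pi.single (1 : Fin 3) W₁ + Pi.single (2 : Fin 3) Z₂)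
    (hd₂ : d₂ 1 = Pi.single (0 : Fin 4) W₁ + Pi.single (1 : Fin 4) W₂ +
      Pi.single (2 : Fin 4) Z₂ + Pi.single (3 : Fin 4) Z₁)
    (hφ : φ 1 = Pi.single (1 : Fin 3) 1) :
    d₁ ∘ₗ d₂ = 0 ∧
    ¬ ∃ (h₂ : R₂ →ₗ[R₂] (Fin 4 → R₂)) (h₁ : (Fin 4 → R₂) →ₗ[R₂] (Fin 3 → R₂)),
        φ = d₁ ∘ₗ h₂ + h₁ ∘ₗ d₂ := by
  set 𝔪 := RingHom.ker (MvPolynomial.constantCoeff (σ := Fin 4) (R := ZMod 2))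
  have hd₁𝔪 : ∀ v, d₁ v ∈ 𝔪 • (⊤ : Submodule R₂ (Fin 3 → R₂)) :=
    d₁.apply_mem_of_forall_pi_single_mem fun i => by
      rw [mem_ideal_smul_top_iff]
      fin_cases i <;> intro j <;> fin_cases j <;> simp [hd₁a, hd₁b, hd₁c, hd₁d, 𝔪]
  have hd₂𝔪 : d₂ 1 ∈ 𝔪 • (⊤ : Submodule R₂ (Fin 4 → R₂)) := by
    rw [mem_ideal_smul_top_iff, hd₂]
    intro j; fin_cases j <;> simp [𝔪]
  refine ⟨LinearMap.ext_ring ?_, ?_⟩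
  · rw [LinearMap.comp_apply, hd₂]
    simp only [map_add, d₁.map_pi_single _ (MvPolynomial.X _), hd₁a, hd₁b, hd₁c, hd₁d]
    funext j
    -- each coordinate is a sum of two equal monomials, which cancel in characteristic 2
    fin_cases j <;> simp <;> grind
  · rintro ⟨h₂, h₁, hφ_eq⟩
    have hφ𝔪 : φ 1 ∈ 𝔪 • (⊤ : Submodule R₂ (Fin 3 → R₂)) := by
      rw [hφ_eq]
      exact add_mem (hd₁𝔪 _) (Submodule.smul_top_le_comap_smul_top 𝔪 h₁ hd₂𝔪)
    have hone : (1 : R₂) ∈ 𝔪 := by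
      simpa [hφ] using mem_ideal_smul_top_iff.mp hφ𝔪 1
    exact RingHom.ker_ne_top _ ((Ideal.eq_top_iff_one _).mpr hone)
end
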